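/- arXiv:2311.02387 — 9 statements merged into one kernel-verified Lean document; each statement's English description precedes it below -/
import Mathlib

section
/- Let $n$ be a positive integer and $T$ a sequence (finite multiset) over a cyclic group of order $n$. If the length of $T$ is at least $(n+1)/2$ and $T$ contains no nonempty subsequence whose product is the identity, then some element $g$ occurs in $T$ with multiplicity at least $2\ell(T) - n + 1$. -/
/-!
Write `Σ(T)` for the set of products of the nonempty subsequences of `T`, so that `T` is
product-one free iff `1 ∉ Σ(T)`, and then `#Σ(T) ≤ n - 1`. If `A + B` is product-one free,
`Σ(A)` and `A.prod • Σ(B)` are disjoint subsets of `Σ(A + B)`, so `#Σ` is superadditive.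
A product-one free *set* `S` has `#Σ(S) ≥ 2 |S| - 1`: once `|S| ≥ 4` one can split off three
elements `x, y, z` with `z ≠ x y` and `y ≠ x z`, whose six products `x, y, z, xy, xz, xyz` are
distinct, and sets of size at most three are checked directly. Splitting `T` into
`h = max_g v_g(T)` layers of distinct elements gives `2 |T| - h ≤ #Σ(T) ≤ n - 1`.
-/

/-- A sequence (multiset) over `G` has a product-one subsequence if some nonempty
list of its terms (a sub-multiset) multiplies to the identity. -/
def HasProdOneSubseq {G : Type*} [Group G] (S : Multiset G) : Prop :=
  ∃ l : List G, l ≠ [] ∧ (l : Multiset G) ≤ S ∧ l.prod = 1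

open Finset

theorem List.Nodup.length_le_card_of_forall_mem {α : Type*} [DecidableEq α] {l : List α}
    {s : Finset α} (hl : l.Nodup) (h : ∀ a ∈ l, a ∈ s) : l.length ≤ #s :=
  (List.toFinset_card_of_nodup hl).ge.trans
    (card_le_card fun a ha => h a (List.mem_toFinset.1 ha))

section CommGroup

variable {G : Type*} [CommGroup G]

theorem self_eq_mul_mul_left_iff {a b c : G} : a = b * (a * c) ↔ b * c = 1 := by
  rw [mul_left_comm, left_eq_mul]

theorem self_eq_mul_mul_right_iff {a b c : G} : a = b * (c * a) ↔ b * c = 1 := by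
  rw [← mul_assoc, right_eq_mul]

end CommGroup

namespace Multiset

theorem exists_eq_cons_cons_cons {α : Type*} {s : Multiset α} (h : 3 ≤ card s) :
    ∃ a b c t, s = a ::ₘ b ::ₘ c ::ₘ t := by
  rcases s with ⟨_ | ⟨a, _ | ⟨b, _ | ⟨c, t⟩⟩⟩⟩
  · simp at h
  · simp at h
  · simp at h
  · exact ⟨a, b, c, t, rfl⟩

variable {G : Type*} [CommGroup G]

theorem exists_eq_cons_cons_cons_of_four_le_card {S : Multiset G} (hS : S.Nodup)
    (h4 : 4 ≤ card S) :
    ∃ x y z R, S = x ::ₘ y ::ₘ z ::ₘ R ∧ z ≠ x * y ∧ y ≠ x * z := by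
  by_cases hw : ∃ w ∈ S, w ^ 2 = 1
  · obtain ⟨w, hwS, hw2⟩ := hw
    obtain ⟨S₁, rfl⟩ := exists_cons_of_mem hwS
    have h3 : 3 ≤ card S₁ := by rw [card_cons] at h4; omega
    obtain ⟨p, a, b, R, rfl⟩ := exists_eq_cons_cons_cons h3
    have hab : a ≠ b := by simp only [nodup_cons, mem_cons, not_or] at hS; tauto
    -- As `w ^ 2 = 1`, both conditions on `(w, p, q)` say `q ≠ p * w`; `a` or `b` satisfies it.
    have good : ∀ q, q ≠ p * w → q ≠ w * p ∧ p ≠ w * q := fun q hq =>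
      ⟨by rwa [mul_comm], fun h => hq (by rw [h, mul_right_comm, ← sq, hw2, one_mul])⟩
    by_cases ha : a = p * w
    · exact ⟨w, p, b, a ::ₘ R, by simp [cons_swap b a], good b (ha ▸ hab.symm)⟩
    · exact ⟨w, p, a, b ::ₘ R, rfl, good a ha⟩
  · -- No element squares to `1`, so if `z = x * y` the triple `(z, x, y)` works, and likewise
    -- `(y, x, z)` if `y = x * z`.
    push Not at hw
    obtain ⟨x, y, z, R, rfl⟩ := exists_eq_cons_cons_cons (s := S) (by omega)
    have hx : x * x ≠ 1 := by simpa [sq] using hw x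
    by_cases hz : z = x * y
    · have hy : y * y ≠ 1 := by simpa [sq] using hw y
      refine ⟨z, x, y, R, by simp [cons_swap], ?_, ?_⟩
      · rw [hz, mul_comm x y, mul_assoc]
        exact fun h => hx (left_eq_mul.1 h)
      · rw [hz, mul_assoc]
        exact fun h => hy (left_eq_mul.1 h)
    by_cases hy : y = x * z
    · have hz' : z * z ≠ 1 := by simpa [sq] using hw z
      refine ⟨y, x, z, R, cons_swap _ _ _, ?_, ?_⟩
      · rw [hy, mul_comm x z, mul_assoc]
        exact fun h => hx (left_eq_mul.1 h)
      · rw [hy, mul_assoc]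
        exact fun h => hz' (left_eq_mul.1 h)
    exact ⟨x, y, z, R, rfl, hz, hy⟩

variable [DecidableEq G]

/-- `Σ(T)`, the set of products of the nonempty subsequences of `T`. -/
def subseqProds (T : Multiset G) : Finset G :=
  ((T.powerset.filter (· ≠ 0)).map Multiset.prod).toFinset

theorem mem_subseqProds {T : Multiset G} {g : G} :
    g ∈ T.subseqProds ↔ ∃ U ≤ T, U ≠ 0 ∧ U.prod = g := by
  simp [subseqProds, and_assoc]

theorem subseqProds_mono {A B : Multiset G} (h : A ≤ B) : A.subseqProds ⊆ B.subseqProds := by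
  intro g hg
  obtain ⟨U, hU, hU0, rfl⟩ := mem_subseqProds.1 hg
  exact mem_subseqProds.2 ⟨U, hU.trans h, hU0, rfl⟩

@[simp]
theorem subseqProds_zero : (0 : Multiset G).subseqProds = ∅ := by
  simp [subseqProds]

@[simp]
theorem subseqProds_cons (a : G) (T : Multiset G) :
    (a ::ₘ T).subseqProds = insert a (T.subseqProds ∪ T.subseqProds.image (a * ·)) := by
  ext g
  simp only [Finset.mem_insert, Finset.mem_union, Finset.mem_image, mem_subseqProds]
  constructor
  · rintro ⟨U, hU, hU0, rfl⟩
    by_cases ha : a ∈ U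
    · obtain ⟨V, rfl⟩ := exists_cons_of_mem ha
      rcases eq_or_ne V 0 with rfl | hV0
      · simp
      · exact Or.inr <| Or.inr
          ⟨_, ⟨V, (cons_le_cons_iff a).1 hU, hV0, rfl⟩, (prod_cons a V).symm⟩
    · exact Or.inr (Or.inl ⟨U, (le_cons_of_notMem ha).1 hU, hU0, rfl⟩)
  · rintro (rfl | ⟨U, hU, hU0, rfl⟩ | ⟨_, ⟨U, hU, -, rfl⟩, rfl⟩)
    · exact ⟨{g}, by simp, by simp, prod_singleton g⟩
    · exact ⟨U, hU.trans (le_cons_self T a), hU0, rfl⟩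
    · exact ⟨a ::ₘ U, cons_le_cons a hU, cons_ne_zero, prod_cons a U⟩

theorem card_subseqProds_add_le {A B : Multiset G} (h1 : (1 : G) ∉ (A + B).subseqProds) :
    #A.subseqProds + #B.subseqProds ≤ #(A + B).subseqProds := by
  have hdisj : Disjoint A.subseqProds (B.subseqProds.image (A.prod * ·)) := by
    rw [Finset.disjoint_left]
    intro _ hU hUV
    obtain ⟨_, hV, hUV⟩ := Finset.mem_image.1 hUV
    -- `U.prod = A.prod * V.prod` makes `(A - U) + V` a product-one subsequence.
    obtain ⟨U, hUA, -, rfl⟩ := mem_subseqProds.1 hU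
    obtain ⟨V, hVB, hV0, rfl⟩ := mem_subseqProds.1 hV
    refine h1 (mem_subseqProds.2 ⟨(A - U) + V, add_le_add tsub_le_self hVB, by simp [hV0], ?_⟩)
    have hA : (A - U).prod * U.prod = A.prod := by rw [← prod_add, tsub_add_cancel_of_le hUA]
    rw [prod_add, ← mul_left_inj U.prod, one_mul, mul_right_comm, hA, hUV]
  have himage : B.subseqProds.image (A.prod * ·) ⊆ (A + B).subseqProds := by
    intro _ hg
    obtain ⟨_, hV, rfl⟩ := Finset.mem_image.1 hg
    obtain ⟨V, hVB, hV0, rfl⟩ := mem_subseqProds.1 hV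
    exact mem_subseqProds.2 ⟨A + V, add_le_add le_rfl hVB, by simp [hV0], prod_add A V⟩
  calc #A.subseqProds + #B.subseqProds
      = #(A.subseqProds ∪ B.subseqProds.image (A.prod * ·)) := by
        rw [card_union_of_disjoint hdisj, card_image_of_injective _ (mul_right_injective _)]
    _ ≤ #(A + B).subseqProds :=
        Finset.card_le_card (union_subset (subseqProds_mono (le_add_right A B)) himage)

theorem subseqProds_pair (x y : G) : (x ::ₘ {y}).subseqProds = {x, y, x * y} := by
  simp [← cons_zero]

theorem subseqProds_triple (x y z : G) :
    (x ::ₘ y ::ₘ {z}).subseqProds = {x, x * y, x * z, y, z, y * z, x * (y * z)} := by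
  simp [← cons_zero]

theorem three_le_card_subseqProds_pair {x y : G} (hS : (x ::ₘ {y}).Nodup)
    (h1 : (1 : G) ∉ (x ::ₘ {y}).subseqProds) :
    3 ≤ #(x ::ₘ {y}).subseqProds := by
  rw [subseqProds_pair] at h1 ⊢
  simp only [nodup_cons, mem_singleton, nodup_singleton, and_true] at hS
  simp only [Finset.mem_insert, Finset.mem_singleton, not_or] at h1
  refine (Finset.card_eq_three.2 ⟨x, y, x * y, hS, fun h => ?_, fun h => ?_, rfl⟩).ge
  · exact h1.2.1 (left_eq_mul.1 h).symm
  · exact h1.1 (right_eq_mul.1 h).symm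

theorem five_le_card_subseqProds_triple {x y z : G} (hS : (x ::ₘ y ::ₘ {z}).Nodup)
    (h1 : (1 : G) ∉ (x ::ₘ y ::ₘ {z}).subseqProds) (hz : z ≠ x * y) :
    5 ≤ #(x ::ₘ y ::ₘ {z}).subseqProds := by
  rw [subseqProds_triple] at h1 ⊢
  refine List.Nodup.length_le_card_of_forall_mem (l := [x, y, z, x * y, x * (y * z)]) ?_ (by simp)
  simp_all [eq_comm (a := (1 : G)), self_eq_mul_mul_left_iff, self_eq_mul_mul_right_iff]

theorem six_le_card_subseqProds_triple {x y z : G} (hS : (x ::ₘ y ::ₘ {z}).Nodup)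
    (h1 : (1 : G) ∉ (x ::ₘ y ::ₘ {z}).subseqProds) (hz : z ≠ x * y) (hy : y ≠ x * z) :
    6 ≤ #(x ::ₘ y ::ₘ {z}).subseqProds := by
  rw [subseqProds_triple] at h1 ⊢
  refine List.Nodup.length_le_card_of_forall_mem
    (l := [x, y, z, x * y, x * z, x * (y * z)]) ?_ (by simp)
  simp_all [eq_comm (a := (1 : G)), self_eq_mul_mul_left_iff, self_eq_mul_mul_right_iff]

theorem five_le_card_subseqProds_of_card_eq_three {S : Multiset G} (hS : S.Nodup)
    (h1 : (1 : G) ∉ S.subseqProds) (h3 : card S = 3) : 5 ≤ #S.subseqProds := by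
  obtain ⟨x, y, z, rfl⟩ := card_eq_three.1 h3
  simp only [insert_eq_cons] at hS h1 ⊢
  by_cases hz : z = x * y
  swap; · exact five_le_card_subseqProds_triple hS h1 hz
  by_cases hy : y = x * z
  swap
  · rw [← cons_zero, cons_swap y z, cons_zero] at hS h1 ⊢
    exact five_le_card_subseqProds_triple hS h1 hy
  -- All three relations `z = x * y`, `y = x * z`, `x = y * z` would give `x * y * z = x * x = 1`.
  have hx : x ≠ y * z := by
    intro hx
    rw [hz] at hy
    have hxyz : x * (y * z) = 1 := by rw [← hx]; exact self_eq_mul_mul_right_iff.1 hy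
    exact h1 (by rw [← hxyz]; simp [← cons_zero])
  have e : x ::ₘ y ::ₘ {z} = y ::ₘ z ::ₘ {x} := by
    rw [← cons_zero, ← cons_zero, cons_swap x y, cons_swap x z]
  rw [e] at hS h1 ⊢
  exact five_le_card_subseqProds_triple hS h1 hx

theorem two_mul_card_le_card_subseqProds_add_one {S : Multiset G} (hS : S.Nodup)
    (h1 : (1 : G) ∉ S.subseqProds) : 2 * card S ≤ #S.subseqProds + 1 := by
  induction hn : card S using Nat.strong_induction_on generalizing S with
  | _ n ih =>
  rcases (show n ≤ 3 ∨ 4 ≤ n by omega) with hn3 | hn4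
  · interval_cases n
    · simp
    · obtain ⟨x, rfl⟩ := card_eq_one.1 hn
      simp [← cons_zero]
    · obtain ⟨x, y, rfl⟩ := card_eq_two.1 hn
      simpa using three_le_card_subseqProds_pair hS h1
    · have := five_le_card_subseqProds_of_card_eq_three hS h1 hn
      omega
  obtain ⟨x, y, z, R, rfl, hz, hy⟩ :=
    exists_eq_cons_cons_cons_of_four_le_card hS (hn ▸ hn4)
  have hsplit : x ::ₘ y ::ₘ z ::ₘ R = (x ::ₘ y ::ₘ {z}) + R := by
    rw [cons_add, cons_add, singleton_add]
  rw [hsplit] at hS h1 ⊢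
  simp only [card_cons] at hn
  have hB := six_le_card_subseqProds_triple (nodup_of_le (le_add_right _ _) hS)
    (fun h => h1 (subseqProds_mono (le_add_right _ _) h)) hz hy
  have hR := ih (card R) (by omega) (nodup_of_le (le_add_left _ _) hS)
    (fun h => h1 (subseqProds_mono (le_add_left _ _) h)) rfl
  have hadd := card_subseqProds_add_le h1
  omega

theorem two_mul_card_le_card_subseqProds_add {T : Multiset G} {k : ℕ}
    (h1 : (1 : G) ∉ T.subseqProds) (hk : ∀ g, T.count g ≤ k) :
    2 * card T ≤ #T.subseqProds + k := by
  induction k generalizing T with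
  | zero =>
    obtain rfl : T = 0 :=
      eq_zero_of_forall_notMem fun g => count_eq_zero.1 (Nat.le_zero.1 (hk g))
    simp
  | succ k ih =>
    have hsplit : T.dedup + (T - T.dedup) = T := add_tsub_cancel_of_le (dedup_le T)
    rw [← hsplit] at h1 ⊢
    have hD := two_mul_card_le_card_subseqProds_add_one (nodup_dedup T)
      (fun h => h1 (subseqProds_mono (le_add_right _ _) h))
    have hR := ih (T := T - T.dedup) (fun h => h1 (subseqProds_mono (le_add_left _ _) h))
      fun g => by
        have := hk g
        rw [count_sub, count_dedup]
        split_ifs with hg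
        · omega
        · simp [count_eq_zero.2 hg]
    have hadd := card_subseqProds_add_le h1
    rw [card_add]
    omega

end Multiset

theorem hasProdOneSubseq_of_one_mem_subseqProds {G : Type*} [CommGroup G] [DecidableEq G]
    {T : Multiset G} (h : (1 : G) ∈ T.subseqProds) : HasProdOneSubseq T := by
  obtain ⟨U, hU, hU0, hprod⟩ := Multiset.mem_subseqProds.1 h
  exact ⟨U.toList, by simpa using hU0, by simpa using hU, by rwa [Multiset.prod_toList]⟩

theorem stmt_0_general {G : Type*} [Group G] [IsCyclic G] [Fintype G] [DecidableEq G]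
    (n : ℕ) (hcard : Fintype.card G = n)
    (T : Multiset G) (hlen : n + 1 ≤ 2 * Multiset.card T)
    (hno : ¬ HasProdOneSubseq T) :
    ∃ g : G, 2 * Multiset.card T - n + 1 ≤ T.count g := by
  let _ : CommGroup G := IsCyclic.commGroup
  have h1 : (1 : G) ∉ T.subseqProds := fun h => hno (hasProdOneSubseq_of_one_mem_subseqProds h)
  have hprods : #T.subseqProds ≤ n - 1 := by
    rw [← hcard, ← card_univ, ← card_erase_of_mem (mem_univ (1 : G))]
    exact card_le_card fun g hg => mem_erase.2 ⟨fun h => h1 (h ▸ hg), mem_univ g⟩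
  obtain ⟨g, -, hg⟩ := T.toFinset.exists_max_image T.count
    (Multiset.toFinset_nonempty.2 (by rintro rfl; simp at hlen))
  refine ⟨g, ?_⟩
  have := Multiset.two_mul_card_le_card_subseqProds_add h1 (k := T.count g) fun x => by
    by_cases hx : x ∈ T
    · exact hg x (Multiset.mem_toFinset.2 hx)
    · simp [Multiset.count_eq_zero.2 hx]
  have hn : 0 < n := hcard ▸ Fintype.card_pos
  omega

theorem stmt_0 {G : Type*} [Group G] [IsCyclic G] [Fintype G] [DecidableEq G]
    (n : ℕ) (hn : 0 < n) (hcard : Fintype.card G = n)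
    (T : Multiset G) (hlen : n + 1 ≤ 2 * Multiset.card T)
    (hno : ¬ HasProdOneSubseq T) :
    ∃ g : G, 2 * Multiset.card T - n + 1 ≤ T.count g :=
  stmt_0_general n hcard T hlen hno
end

section
/- Let $p$ be a prime and $T$ a sequence of length $p-1$ over a cyclic group of order $p$. If $T$ contains no nonempty subsequence whose product is the identity, then all terms of $T$ are equal. -/
section Aux

variable {G : Type*} [Group G] [DecidableEq G]

/-- The set of products of nonempty sublists of `l`. -/
def pset : List G → Finset G
  | [] => ∅
  | a :: l => insert a (pset l ∪ (pset l).image (a * ·))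

lemma mem_pset_cons_self (a : G) (l : List G) : a ∈ pset (a :: l) := by
  simp [pset]

lemma pset_subset_cons (a : G) (l : List G) : pset l ⊆ pset (a :: l) := by
  intro x hx
  simp only [pset, Finset.mem_insert, Finset.mem_union]
  tauto

lemma mul_mem_pset_cons {a x : G} {l : List G} (hx : x ∈ pset l) :
    a * x ∈ pset (a :: l) := by
  simp only [pset, Finset.mem_insert, Finset.mem_union, Finset.mem_image]
  exact Or.inr (Or.inr ⟨x, hx, rfl⟩)

lemma exists_of_mem_pset :
    ∀ {l : List G} {x : G}, x ∈ pset l → ∃ s : List G, s ≠ [] ∧ s.Sublist l ∧ s.prod = x := by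
  intro l
  induction l with
  | nil => intro x; simp [pset]
  | cons a l ih =>
    intro x hx
    simp only [pset, Finset.mem_insert, Finset.mem_union, Finset.mem_image] at hx
    rcases hx with rfl | hx | ⟨y, hy, rfl⟩
    · exact ⟨[x], by simp, by simp, by simp⟩
    · obtain ⟨s, hs0, hs1, hs2⟩ := ih hx
      exact ⟨s, hs0, hs1.trans (List.sublist_cons_self a l), hs2⟩
    · obtain ⟨s, hs0, hs1, hs2⟩ := ih hy
      exact ⟨a :: s, by simp, List.Sublist.cons₂ a hs1, by simp [hs2]⟩

lemma pset_card_lt {p : ℕ} (hp : 0 < p) (hpow : ∀ g : G, g ^ p = 1) (a : G) (l : List G)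
    (h1 : (1 : G) ∉ pset (a :: l)) : (pset l).card < (pset (a :: l)).card := by
  by_contra h
  push_neg at h
  have hsub : pset l ⊆ pset (a :: l) := pset_subset_cons a l
  have heq : pset l = pset (a :: l) := Finset.eq_of_subset_of_card_le hsub h
  have ha : a ∈ pset l := heq ▸ mem_pset_cons_self a l
  have hmul : ∀ x ∈ pset l, a * x ∈ pset l := fun x hx => heq ▸ mul_mem_pset_cons hx
  have hpowmem : ∀ n : ℕ, a ^ (n + 1) ∈ pset l := by
    intro n
    induction n with
    | zero => simpa using ha
    | succ k ih =>
      have := hmul _ ih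
      rwa [← pow_succ'] at this
  obtain ⟨k, rfl⟩ := Nat.exists_eq_succ_of_ne_zero hp.ne'
  have h2 := hpowmem k
  rw [hpow] at h2
  exact h1 (heq ▸ h2)

lemma pset_card_ge {p : ℕ} (hp : 0 < p) (hpow : ∀ g : G, g ^ p = 1) {a b : G} (hab : a ≠ b) :
    ∀ l : List G, (1 : G) ∉ pset (l ++ [a, b]) →
      l.length + 3 ≤ (pset (l ++ [a, b])).card := by
  intro l
  induction l with
  | nil =>
    intro h1
    have hane : a ≠ 1 := fun h => h1 (h ▸ mem_pset_cons_self a [b])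
    have hbne : b ≠ 1 := fun h =>
      h1 (pset_subset_cons a [b] (h ▸ mem_pset_cons_self b []))
    have hm1 : a ∈ pset ([] ++ [a, b]) := mem_pset_cons_self a [b]
    have hm2 : b ∈ pset ([] ++ [a, b]) := pset_subset_cons a [b] (mem_pset_cons_self b [])
    have hm3 : a * b ∈ pset ([] ++ [a, b]) := mul_mem_pset_cons (mem_pset_cons_self b [])
    have hsub : ({a, b, a * b} : Finset G) ⊆ pset ([] ++ [a, b]) := by
      intro x hx
      simp only [Finset.mem_insert, Finset.mem_singleton] at hx
      rcases hx with rfl | rfl | rfl <;> assumption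
    have hne1 : a ≠ a * b := fun h => hbne (mul_left_cancel ((mul_one a).trans h)).symm
    have hne2 : b ≠ a * b := fun h => hane (mul_right_cancel ((one_mul b).trans h)).symm
    have hcard3 : ({a, b, a * b} : Finset G).card = 3 := by
      rw [Finset.card_insert_of_notMem (by simp [hab, hne1]),
        Finset.card_insert_of_notMem (by simp [hne2]), Finset.card_singleton]
    have := Finset.card_le_card hsub
    simp only [List.length_nil]
    omega
  | cons c l ih =>
    intro h1
    have hstep := pset_card_lt hp hpow c (l ++ [a, b]) (by simpa using h1)
    have h1' : (1 : G) ∉ pset (l ++ [a, b]) := fun h =>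
      h1 (pset_subset_cons c _ (by simpa using h))
    have := ih h1'
    simp only [List.cons_append, List.length_cons]
    omega

end Aux

theorem stmt_1 {G : Type*} [Group G] [IsCyclic G] [Fintype G]
    (p : ℕ) (hp : p.Prime) (hcard : Fintype.card G = p)
    (T : Multiset G) (hlen : Multiset.card T = p - 1)
    (hno : ¬ HasProdOneSubseq T) :
    ∀ a ∈ T, ∀ b ∈ T, a = b := by
  classical
  intro a ha b hb
  by_contra hab
  have hpow : ∀ g : G, g ^ p = 1 := fun g => hcard ▸ pow_card_eq_one
  have hbe : b ∈ T.erase a := (Multiset.mem_erase_of_ne (fun h => hab h.symm)).mpr hb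
  set T'' := (T.erase a).erase b with hT''
  have hT : T = a ::ₘ b ::ₘ T'' := by
    rw [hT'', Multiset.cons_erase hbe, Multiset.cons_erase ha]
  set L : List G := T''.toList ++ [a, b] with hLdef
  have hL : (L : Multiset G) = T := by
    rw [hLdef, hT]
    rw [← Multiset.coe_add, Multiset.coe_toList]
    have : ([a, b] : Multiset G) = a ::ₘ b ::ₘ 0 := rfl
    rw [this, add_comm, Multiset.cons_add, Multiset.cons_add, zero_add]
  have h1 : (1 : G) ∉ pset L := by
    intro h
    obtain ⟨s, hs0, hs1, hs2⟩ := exists_of_mem_pset h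
    exact hno ⟨s, hs0, hL ▸ (Multiset.coe_le.mpr hs1.subperm), hs2⟩
  have hlenL : L.length = Multiset.card T'' + 2 := by
    simp [hLdef]
  have hcardT : p - 1 = Multiset.card T'' + 2 := by
    rw [← hlen, hT]
    simp
  have hge := pset_card_ge hp.pos hpow hab T''.toList h1
  rw [← hLdef] at hge
  simp only [Multiset.length_toList] at hge
  have hple : p ≤ (pset L).card := by
    have hp2 : 2 ≤ p := hp.two_le
    omega
  have hub : (pset L).card ≤ p - 1 := by
    have hsub : pset L ⊆ Finset.univ.erase 1 := fun x hx =>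
      Finset.mem_erase.mpr ⟨fun h => h1 (h ▸ hx), Finset.mem_univ x⟩
    have := Finset.card_le_card hsub
    rwa [Finset.card_erase_of_mem (Finset.mem_univ 1), Finset.card_univ, hcard] at this
  omega
end

section
/- Let $G$ be a finite group and $S$ a sequence over $G$ of length equal to the small Davenport constant $\mathsf{d}(G)$. If $1 \notin \Pi(S)$, then $\Pi(S) = G \setminus \{1\}$, i.e., every non-identity element of $G$ is a product (in some order) of the terms of some nonempty subsequence of $S$. -/
/-- `Π(S)`: the set of elements expressible as the ordered product of the terms
of some nonempty subsequence of `S`. -/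
def subseqProds {G : Type*} [Group G] (S : Multiset G) : Set G :=
  {g | ∃ l : List G, l ≠ [] ∧ (l : Multiset G) ≤ S ∧ l.prod = g}

/-- The small Davenport constant: the maximal length of a sequence over `G`
with no nonempty product-one subsequence. -/
noncomputable def smallDavenport (G : Type*) [Group G] : ℕ :=
  sSup {n | ∃ S : Multiset G, Multiset.card S = n ∧ ¬ HasProdOneSubseq S}

/-- Pigeonhole: any sequence of length ≥ |G| has a product-one subsequence. -/
lemma hasProdOne_of_card_ge {G : Type*} [Group G] [Fintype G] (S : Multiset G)
    (h : Fintype.card G ≤ Multiset.card S) : HasProdOneSubseq S := by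
  set l := S.toList with hl
  have hlS : (l : Multiset G) = S := S.coe_toList
  have hlen : l.length = Multiset.card S := by rw [← hlS, Multiset.coe_card]
  have hcard : Fintype.card G < Fintype.card (Fin (l.length + 1)) := by
    simp [hlen]; omega
  obtain ⟨a, b, hne, heq⟩ := Fintype.exists_ne_map_eq_of_card_lt
    (fun i : Fin (l.length + 1) => (l.take i).prod) hcard
  wlog hab : (a : ℕ) < (b : ℕ) generalizing a b
  · exact this b a hne.symm heq.symm (by omega)
  set t := (l.drop a).take (b - a) with ht
  have htake : l.take b = l.take a ++ t := by
    rw [ht, ← List.take_add]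
    congr 1; omega
  refine ⟨t, ?_, ?_, ?_⟩
  · have hb : (b : ℕ) ≤ l.length := by omega
    have : t.length = min ((b : ℕ) - a) (l.length - a) := by
      simp [ht]
    intro hnil
    rw [hnil] at this
    simp at this
    omega
  · rw [← hlS]
    exact ((List.take_sublist _ _).trans (List.drop_sublist _ _)).subperm
  · have := heq
    rw [htake, List.prod_append] at this
    exact (left_eq_mul.mp this)

theorem stmt_2 {G : Type*} [Group G] [Fintype G]
    (S : Multiset G) (hlen : Multiset.card S = smallDavenport G)
    (h1 : (1 : G) ∉ subseqProds S) :
    subseqProds S = {g : G | g ≠ 1} := by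
  ext g
  simp only [Set.mem_setOf_eq]
  constructor
  · rintro hg rfl
    exact h1 hg
  · intro hg
    classical
    by_contra hg'
    -- `g⁻¹ ::ₘ S` has no product-one subsequence
    have hS' : ¬ HasProdOneSubseq (g⁻¹ ::ₘ S) := by
      rintro ⟨l, hne, hle, hprod⟩
      by_cases hmem : g⁻¹ ∈ l
      · obtain ⟨l1, l2, rfl⟩ := List.append_of_mem hmem
        have hsub : ((l2 ++ l1 : List G) : Multiset G) ≤ S := by
          rw [← Multiset.cons_le_cons_iff g⁻¹]
          refine le_trans (le_of_eq ?_) hle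
          simp only [← Multiset.coe_add, ← Multiset.cons_coe]
          rw [← Multiset.cons_add, add_comm]
        have h' : l1.prod * (g⁻¹ * l2.prod) = 1 := by
          rw [List.prod_append, List.prod_cons] at hprod; exact hprod
        have h2 : g⁻¹ * l2.prod = l1.prod⁻¹ := eq_inv_of_mul_eq_one_right h'
        have hgp : g = l2.prod * l1.prod := by
          rw [← inv_mul_eq_one, ← mul_assoc, h2, inv_mul_cancel]
        have hp : (l2 ++ l1).prod = g := by
          rw [List.prod_append, hgp]
        have hnil : l2 ++ l1 ≠ [] := by
          intro h0
          obtain ⟨h2', h1'⟩ := List.append_eq_nil_iff.mp h0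
          subst h2'; subst h1'
          simp at hprod
          exact hg hprod
        exact hg' ⟨l2 ++ l1, hnil, hsub, hp⟩
      · have hle' : (l : Multiset G) ≤ S := by
          rw [Multiset.le_iff_count] at hle ⊢
          intro x
          have hx := hle x
          rcases eq_or_ne x g⁻¹ with rfl | hxne
          · simp [Multiset.coe_count, List.count_eq_zero_of_not_mem hmem]
          · rwa [Multiset.count_cons_of_ne hxne] at hx
        exact h1 ⟨l, hne, hle', hprod⟩
    have hmem2 : Multiset.card (g⁻¹ ::ₘ S) ∈
        {n | ∃ T : Multiset G, Multiset.card T = n ∧ ¬ HasProdOneSubseq T} :=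
      ⟨_, rfl, hS'⟩
    have hbdd : BddAbove {n | ∃ T : Multiset G, Multiset.card T = n ∧ ¬ HasProdOneSubseq T} := by
      refine ⟨Fintype.card G, ?_⟩
      rintro n ⟨T, rfl, hT⟩
      by_contra hn
      push_neg at hn
      exact hT (hasProdOne_of_card_ge T hn.le)
    have hle2 := le_csSup hbdd hmem2
    rw [Multiset.card_cons, hlen] at hle2
    exact absurd hle2 (by simp [smallDavenport])
end

section
/- Let $p$ be an odd prime and $G$ the non-abelian group of order $p^3$ and exponent $p$. For any non-central element $g \in G$, the $z$-class of $g$ equals $C_G(g) \setminus Z(G) = \{ g^\lambda u : 1 \le \lambda \le p-1,\ u \in Z(G)\}$. -/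
/-- Two elements are `z`-equivalent if their centralizers are conjugate subgroups. -/
def zEquiv {G : Type*} [Group G] (g h : G) : Prop :=
  ∃ x : G, (Subgroup.centralizer {g}).map (MulAut.conj x).toMonoidHom
      = Subgroup.centralizer {h}

open Subgroup Pointwise

section Aux

variable {p : ℕ} {G : Type*} [Group G] [Fintype G]

/-- membership in a conjugated subgroup -/
lemma mem_map_conj_iff (x a : G) (C : Subgroup G) :
    a ∈ C.map (MulAut.conj x).toMonoidHom ↔ x⁻¹ * a * x ∈ C := by
  constructor
  · rintro ⟨c, hc, rfl⟩
    simpa [MulAut.conj_apply, mul_assoc] using hc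
  · intro h
    exact ⟨x⁻¹ * a * x, h, by simp [MulAut.conj_apply, mul_assoc]⟩

/-- conjugate of a centralizer of a singleton -/
lemma map_conj_centralizer (x g : G) :
    (Subgroup.centralizer {g}).map (MulAut.conj x).toMonoidHom
      = Subgroup.centralizer {x * g * x⁻¹} := by
  ext a
  rw [mem_map_conj_iff, mem_centralizer_singleton_iff, mem_centralizer_singleton_iff]
  constructor
  · intro h
    have := congrArg (fun t => x * t * x⁻¹) h
    simpa [mul_assoc] using this
  · intro h
    have := congrArg (fun t => x⁻¹ * t * x) h
    simpa [mul_assoc] using this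

/-- the center has cardinality `p` -/
lemma card_center (hp : p.Prime) (hcard : Fintype.card G = p ^ 3)
    (hna : ∃ a b : G, a * b ≠ b * a) :
    Nat.card (Subgroup.center G) = p := by
  haveI : Fact p.Prime := ⟨hp⟩
  have hGcard : Nat.card G = p ^ 3 := by rw [Nat.card_eq_fintype_card, hcard]
  have hpG : IsPGroup p G := IsPGroup.of_card hGcard
  haveI : Nontrivial G := by
    rw [← Fintype.one_lt_card_iff_nontrivial, hcard]
    exact Nat.one_lt_pow (by norm_num) hp.one_lt
  have hZdvd : Nat.card (Subgroup.center G) ∣ p ^ 3 := by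
    rw [← hGcard, ← Subgroup.card_top (G := G)]
    exact Subgroup.card_dvd_of_le le_top
  obtain ⟨k, hk3, hZk⟩ := (Nat.dvd_prime_pow hp).mp hZdvd
  have hZnt : Nontrivial (Subgroup.center G) := hpG.center_nontrivial
  have hk0 : k ≠ 0 := by
    rintro rfl
    rw [pow_zero] at hZk
    haveI := (Nat.card_eq_one_iff_unique.mp hZk).1
    obtain ⟨a', b', hab⟩ := hZnt.exists_pair_ne
    exact hab (Subsingleton.elim a' b')
  have hkne3 : k ≠ 3 := by
    rintro rfl
    have : Subgroup.center G = ⊤ := Subgroup.eq_top_of_le_card _ (by rw [hGcard, hZk])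
    obtain ⟨a, b, hab⟩ := hna
    exact hab ((Subgroup.mem_center_iff.mp (this ▸ Subgroup.mem_top b)) a)
  have hkne2 : k ≠ 2 := by
    rintro rfl
    have hq : Nat.card (G ⧸ Subgroup.center G) = p := by
      have := Subgroup.card_eq_card_quotient_mul_card_subgroup (Subgroup.center G)
      rw [hGcard, hZk] at this
      have hp0 : p ^ 2 ≠ 0 := pow_ne_zero _ hp.pos.ne'
      have : p ^ 3 / p ^ 2 = Nat.card (G ⧸ Subgroup.center G) := by
        rw [this, Nat.mul_div_cancel _ (Nat.pos_of_ne_zero hp0)]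
      rw [← this, pow_succ, Nat.mul_div_cancel_left _ (Nat.pos_of_ne_zero hp0)]
    haveI : IsCyclic (G ⧸ Subgroup.center G) := isCyclic_of_prime_card hq
    obtain ⟨a, b, hab⟩ := hna
    exact hab (commutative_of_cyclic_center_quotient (QuotientGroup.mk' _)
      (QuotientGroup.ker_mk' (Subgroup.center G)).le a b)
  interval_cases k
  · exact absurd rfl hk0
  · rw [hZk, pow_one]
  · exact absurd rfl hkne2
  · exact absurd rfl hkne3

end Aux

section Aux2
variable {p : ℕ} {G : Type*} [Group G] [Fintype G]

/-- the centralizer of a noncentral element has cardinality `p ^ 2` -/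
lemma card_centralizer' (hp : p.Prime) (hcard : Fintype.card G = p ^ 3)
    (hna : ∃ a b : G, a * b ≠ b * a) {h : G} (hh : h ∉ Subgroup.center G) :
    Nat.card (Subgroup.centralizer {h}) = p ^ 2 := by
  haveI : Fact p.Prime := ⟨hp⟩
  have hGcard : Nat.card G = p ^ 3 := by rw [Nat.card_eq_fintype_card, hcard]
  have hZ : Nat.card (Subgroup.center G) = p := card_center hp hcard hna
  have hZle : Subgroup.center G ≤ Subgroup.centralizer {h} :=
    Subgroup.center_le_centralizer {h}
  have hhC : h ∈ Subgroup.centralizer {h} := mem_centralizer_singleton_iff.mpr rfl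
  have hdvd : Nat.card (Subgroup.centralizer {h}) ∣ p ^ 3 := by
    rw [← hGcard, ← Subgroup.card_top (G := G)]
    exact Subgroup.card_dvd_of_le le_top
  obtain ⟨k, hk3, hCk⟩ := (Nat.dvd_prime_pow hp).mp hdvd
  have hne3 : k ≠ 3 := by
    rintro rfl
    have htop : Subgroup.centralizer {h} = ⊤ :=
      Subgroup.eq_top_of_le_card _ (by rw [hGcard, hCk])
    exact hh (Subgroup.mem_center_iff.mpr fun b =>
      mem_centralizer_singleton_iff.mp (htop ▸ Subgroup.mem_top b))
  have hgt : ¬ Nat.card (Subgroup.centralizer {h}) ≤ p := by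
    intro hle
    have heq : Subgroup.center G = Subgroup.centralizer {h} :=
      Subgroup.eq_of_le_of_card_ge hZle (by rw [hZ]; exact hle)
    exact hh (by rw [heq]; exact hhC)
  interval_cases k
  · exact absurd (by rw [hCk, pow_zero]; exact hp.one_lt.le.trans' (by norm_num)) hgt
  · exact absurd (by rw [hCk, pow_one]) hgt
  · exact hCk
  · exact absurd rfl hne3

/-- commutators are central -/
lemma comm_mem_center' (hp : p.Prime) (hcard : Fintype.card G = p ^ 3)
    (hna : ∃ a b : G, a * b ≠ b * a) (x y : G) :
    x * y * x⁻¹ * y⁻¹ ∈ Subgroup.center G := by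
  haveI : Fact p.Prime := ⟨hp⟩
  have hGcard : Nat.card G = p ^ 3 := by rw [Nat.card_eq_fintype_card, hcard]
  have hZ : Nat.card (Subgroup.center G) = p := card_center hp hcard hna
  have hQ : Nat.card (G ⧸ Subgroup.center G) = p ^ 2 := by
    have h1 := Subgroup.card_eq_card_quotient_mul_card_subgroup (Subgroup.center G)
    rw [hGcard, hZ] at h1
    have hp0 : 0 < p := hp.pos
    have : p ^ 3 / p = Nat.card (G ⧸ Subgroup.center G) := by
      rw [h1, Nat.mul_div_cancel _ hp0]
    rw [← this, pow_succ, Nat.mul_div_cancel _ hp0]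
  have hcomm := IsPGroup.commutative_of_card_eq_prime_sq hQ
  rw [← QuotientGroup.eq_one_iff]
  have hc := hcomm ((x : G ⧸ Subgroup.center G)) ((y : G ⧸ Subgroup.center G))
  have : ((x * y * x⁻¹ * y⁻¹ : G) : G ⧸ Subgroup.center G)
      = (x : G ⧸ Subgroup.center G) * y * (x : G ⧸ Subgroup.center G)⁻¹
        * (y : G ⧸ Subgroup.center G)⁻¹ := by
    rfl
  rw [this, hc]
  group

/-- the centralizer of a noncentral element of `C_G(g)` is `C_G(g)` itself -/
lemma centralizer_eq' (hp : p.Prime) (hcard : Fintype.card G = p ^ 3)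
    (hna : ∃ a b : G, a * b ≠ b * a) {g h : G} (hg : g ∉ Subgroup.center G)
    (hgC : h ∈ Subgroup.centralizer {g}) (hh : h ∉ Subgroup.center G) :
    Subgroup.centralizer {h} = Subgroup.centralizer {g} := by
  haveI : Fact p.Prime := ⟨hp⟩
  have hcomm := IsPGroup.commutative_of_card_eq_prime_sq (card_centralizer' hp hcard hna hg)
  have hle : Subgroup.centralizer {g} ≤ Subgroup.centralizer {h} := by
    intro c hc
    rw [mem_centralizer_singleton_iff]
    have h2 := Subtype.ext_iff.mp (hcomm ⟨h, hgC⟩ ⟨c, hc⟩)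
    simpa using h2.symm
  exact (Subgroup.eq_of_le_of_card_ge hle (by
    rw [card_centralizer' hp hcard hna hg, card_centralizer' hp hcard hna hh])).symm

end Aux2

theorem stmt_3 (p : ℕ) (hp : p.Prime) (hodd : Odd p)
    {G : Type*} [Group G] [Fintype G]
    (hcard : Fintype.card G = p ^ 3)
    (hexp : Monoid.exponent G = p)
    (hna : ∃ a b : G, a * b ≠ b * a)
    (g : G) (hg : g ∉ Subgroup.center G) :
    {h : G | zEquiv g h}
        = (Subgroup.centralizer {g} : Set G) \ (Subgroup.center G : Set G) ∧
    {h : G | zEquiv g h}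
        = {w : G | ∃ l : ℕ, ∃ u ∈ Subgroup.center G,
            1 ≤ l ∧ l ≤ p - 1 ∧ w = g ^ l * u} := by
  classical
  haveI : Fact p.Prime := ⟨hp⟩
  have hGcard : Nat.card G = p ^ 3 := by rw [Nat.card_eq_fintype_card, hcard]
  have hZ : Nat.card (Subgroup.center G) = p := card_center hp hcard hna
  have hgC : g ∈ Subgroup.centralizer {g} := mem_centralizer_singleton_iff.mpr rfl
  have hZle : Subgroup.center G ≤ Subgroup.centralizer {g} :=
    Subgroup.center_le_centralizer {g}
  have key1 : {h : G | zEquiv g h}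
      = (Subgroup.centralizer {g} : Set G) \ (Subgroup.center G : Set G) := by
    ext h
    simp only [Set.mem_setOf_eq, Set.mem_diff, SetLike.mem_coe]
    constructor
    · rintro ⟨x, hx⟩
      rw [map_conj_centralizer] at hx
      have hconj_mem : x * g * x⁻¹ ∈ Subgroup.centralizer {g} := by
        have hcm := comm_mem_center' hp hcard hna x g
        have he : x * g * x⁻¹ = (x * g * x⁻¹ * g⁻¹) * g := by group
        rw [he]
        exact Subgroup.mul_mem _ (hZle hcm) hgC
      have hconj_nc : x * g * x⁻¹ ∉ Subgroup.center G := by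
        intro hmem
        apply hg
        have he : g = x⁻¹ * (x * g * x⁻¹) * x⁻¹⁻¹ := by group
        rw [he]
        exact Subgroup.Normal.conj_mem inferInstance _ hmem x⁻¹
      have hCC : Subgroup.centralizer {x * g * x⁻¹} = Subgroup.centralizer {g} :=
        centralizer_eq' hp hcard hna hg hconj_mem hconj_nc
      rw [hCC] at hx
      have hhZ : h ∉ Subgroup.center G := by
        intro hmem
        have htop : Subgroup.centralizer {h} = ⊤ := by
          ext b
          simp only [mem_centralizer_singleton_iff, Subgroup.mem_top, iff_true]
          exact Subgroup.mem_center_iff.mp hmem b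
        rw [htop] at hx
        have : g ∈ Subgroup.center G := Subgroup.mem_center_iff.mpr fun b =>
          mem_centralizer_singleton_iff.mp (hx ▸ Subgroup.mem_top b)
        exact hg this
      exact ⟨by rw [hx]; exact mem_centralizer_singleton_iff.mpr rfl, hhZ⟩
    · rintro ⟨hhC, hhZ⟩
      refine ⟨1, ?_⟩
      rw [map_conj_centralizer]
      have : (1 : G) * g * 1⁻¹ = g := by group
      rw [this]
      exact (centralizer_eq' hp hcard hna hg hhC hhZ).symm
  -- order of g is p
  have hgord : orderOf g = p := by
    have h1 : orderOf g ∣ p := hexp ▸ Monoid.order_dvd_exponent g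
    rcases (Nat.dvd_prime hp).mp h1 with h | h
    · exact absurd (orderOf_eq_one_iff.mp h ▸ Subgroup.one_mem _) hg
    · exact h
  -- the join of zpowers g and the center is the centralizer
  have hJ : Subgroup.zpowers g ⊔ Subgroup.center G = Subgroup.centralizer {g} := by
    have hle : Subgroup.zpowers g ⊔ Subgroup.center G ≤ Subgroup.centralizer {g} :=
      sup_le (Subgroup.zpowers_le.mpr hgC) hZle
    have hdvd : Nat.card (Subgroup.zpowers g ⊔ Subgroup.center G : Subgroup G) ∣ p ^ 2 := by
      rw [← card_centralizer' hp hcard hna hg]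
      exact Subgroup.card_dvd_of_le hle
    obtain ⟨k, hk2, hJk⟩ := (Nat.dvd_prime_pow hp).mp hdvd
    have hgt : ¬ Nat.card (Subgroup.zpowers g ⊔ Subgroup.center G : Subgroup G) ≤ p := by
      intro hle2
      have heq : Subgroup.center G = Subgroup.zpowers g ⊔ Subgroup.center G :=
        Subgroup.eq_of_le_of_card_ge le_sup_right (by rw [hZ]; exact hle2)
      have : g ∈ Subgroup.center G := by
        rw [heq]
        exact (le_sup_left : Subgroup.zpowers g ≤ _) (Subgroup.mem_zpowers g)
      exact hg this
    have hk : k = 2 := by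
      interval_cases k
      · exact absurd (by rw [hJk, pow_zero]; exact hp.one_lt.le.trans' (by norm_num)) hgt
      · exact absurd (by rw [hJk, pow_one]) hgt
      · rfl
    rw [hk] at hJk
    exact Subgroup.eq_of_le_of_card_ge hle
      (by rw [card_centralizer' hp hcard hna hg, hJk])
  have key2 : (Subgroup.centralizer {g} : Set G) \ (Subgroup.center G : Set G)
      = {w : G | ∃ l : ℕ, ∃ u ∈ Subgroup.center G,
          1 ≤ l ∧ l ≤ p - 1 ∧ w = g ^ l * u} := by
    ext h
    simp only [Set.mem_diff, SetLike.mem_coe, Set.mem_setOf_eq]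
    constructor
    · rintro ⟨hhC, hhZ⟩
      have hhJ : h ∈ Subgroup.zpowers g ⊔ Subgroup.center G := by rw [hJ]; exact hhC
      have hhJ' : h ∈ (Subgroup.zpowers g : Set G) * (Subgroup.center G : Set G) := by
        rw [← Subgroup.mul_normal]
        exact hhJ
      obtain ⟨a, ha, u, hu, rfl⟩ := hhJ'
      obtain ⟨n, rfl⟩ := (Submonoid.mem_powers_iff _ _).mp (mem_powers_iff_mem_zpowers.mpr ha)
      have hmod : g ^ (n % p) = g ^ n := by rw [← hgord]; exact pow_mod_orderOf g n
      have hlt : n % p < p := Nat.mod_lt _ hp.pos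
      have hne0 : n % p ≠ 0 := by
        rintro h0
        apply hhZ
        rw [← hmod, h0, pow_zero]
        simpa using hu
      exact ⟨n % p, u, hu, Nat.one_le_iff_ne_zero.mpr hne0, Nat.le_sub_one_of_lt hlt,
        by rw [hmod]⟩
    · rintro ⟨l, u, hu, hl1, hl2, rfl⟩
      have hglC : g ^ l ∈ Subgroup.centralizer {g} :=
        mem_centralizer_singleton_iff.mpr ((Commute.refl g).pow_left l).eq
      refine ⟨Subgroup.mul_mem _ hglC (hZle hu), ?_⟩
      intro hmem
      have hglZ : g ^ l ∈ Subgroup.center G := by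
        have : g ^ l = (g ^ l * u) * u⁻¹ := by group
        rw [this]
        exact Subgroup.mul_mem _ hmem (Subgroup.inv_mem _ hu)
      have hllt : l < p := lt_of_le_of_lt hl2 (Nat.sub_lt hp.pos one_pos)
      have hcop : Nat.Coprime p l :=
        hp.coprime_iff_not_dvd.mpr (Nat.not_dvd_of_pos_of_lt hl1 hllt)
      have hordl : orderOf (g ^ l) = p := by
        rw [orderOf_pow' g (Nat.one_le_iff_ne_zero.mp hl1), hgord, hcop.gcd_eq_one, Nat.div_one]
      have hzle : Subgroup.zpowers (g ^ l) ≤ Subgroup.zpowers g :=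
        Subgroup.zpowers_le.mpr (Subgroup.pow_mem _ (Subgroup.mem_zpowers g) l)
      have heqz : Subgroup.zpowers (g ^ l) = Subgroup.zpowers g :=
        Subgroup.eq_of_le_of_card_ge hzle
          (by rw [Nat.card_zpowers, Nat.card_zpowers, hgord, hordl])
      have hgz : g ∈ Subgroup.zpowers (g ^ l) := by
        rw [heqz]; exact Subgroup.mem_zpowers g
      exact hg (Subgroup.zpowers_le.mpr hglZ hgz)
  exact ⟨key1, key1.trans key2⟩
end

section
/- Let $p$ be an odd prime and $G$ the non-abelian group of order $p^3$ and exponent $p$. Then $G$ has exactly $p+2$ $z$-classes (equivalence classes under conjugacy of centralizers), and exactly $p^2 + p - 1$ conjugacy classes. -/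
open Subgroup

theorem Setoid.ncard_classes_ker {α β : Type*} (f : α → β) :
    (Setoid.ker f).classes.ncard = (Set.range f).ncard := by
  rw [← Nat.card_coe_set_eq, ← Nat.card_congr (Setoid.quotientEquivClasses _),
    Nat.card_congr (Setoid.quotientKerEquivRange f), Nat.card_coe_set_eq]

theorem Set.ncard_eq_ncard_image_mul {α β : Type*} {s : Set α} (hs : s.Finite)
    {f : α → β} {n : ℕ} (h : ∀ a ∈ s, {x ∈ s | f x = f a}.ncard = n) :
    s.ncard = (f '' s).ncard * n := by
  classical
  obtain ⟨s, rfl⟩ := hs.exists_finset_coe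
  rw [← Finset.coe_image, Set.ncard_coe_finset, Set.ncard_coe_finset,
    Finset.card_eq_sum_card_image f s, ← smul_eq_mul, ← Finset.sum_const]
  refine Finset.sum_congr rfl fun b hb => ?_
  obtain ⟨a, ha, rfl⟩ := Finset.mem_image.mp hb
  rw [← h a ha, ← Set.ncard_coe_finset, Finset.coe_filter]
  rfl

section Centralizer

variable {G : Type*} [Group G]

theorem Subgroup.ncard_coe (H : Subgroup G) : (H : Set G).ncard = Nat.card H :=
  (Nat.card_coe_set_eq _).symm

theorem Subgroup.card_lt_card_of_lt [Finite G] {H K : Subgroup G} (h : H < K) :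
    Nat.card H < Nat.card K :=
  (card_le_of_le h.le).lt_of_ne fun he => h.ne (eq_of_le_of_card_ge h.le he.ge)

theorem Subgroup.normal_of_center_le [IsMulCommutative (G ⧸ center G)] {H : Subgroup G}
    (hH : center G ≤ H) : H.Normal :=
  .of_commutator_le G ((Normal.quotient_commutative_iff_commutator_le.mp ‹_›).trans hH)

theorem Subgroup.centralizer_singleton_eq_top_iff {g : G} :
    centralizer {g} = ⊤ ↔ g ∈ center G := by
  rw [centralizer_eq_top_iff_subset, Set.singleton_subset_iff, SetLike.mem_coe]

theorem Subgroup.range_centralizer_singleton :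
    Set.range (fun g : G => centralizer {g}) =
      insert ⊤ ((fun g : G => centralizer {g}) '' (center G : Set G)ᶜ) := by
  ext H
  constructor
  · rintro ⟨g, rfl⟩
    by_cases hg : g ∈ center G
    · exact Or.inl (centralizer_singleton_eq_top_iff.mpr hg)
    · exact Or.inr ⟨g, hg, rfl⟩
  · rintro (rfl | ⟨g, -, rfl⟩)
    · exact ⟨1, centralizer_singleton_eq_top_iff.mpr (one_mem _)⟩
    · exact ⟨g, rfl⟩

theorem Subgroup.top_notMem_image_centralizer_singleton_compl_center :
    ⊤ ∉ (fun g : G => centralizer {g}) '' (center G : Set G)ᶜ := by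
  rintro ⟨g, hg, hgt⟩
  exact hg (centralizer_singleton_eq_top_iff.mp hgt)

theorem card_conjClasses_mul_card_eq_sum_card_centralizer [Fintype G] :
    Nat.card (ConjClasses G) * Nat.card G = ∑ g : G, Nat.card (centralizer {g}) := by
  rw [← card_comm_eq_card_conjClasses_mul_card,
    Nat.card_congr (Equiv.subtypeProdEquivSigmaSubtype Commute), Nat.card_sigma]
  refine Finset.sum_congr rfl fun g _ => Nat.card_congr (Equiv.subtypeEquivRight fun h => ?_)
  rw [mem_centralizer_singleton_iff, commute_iff_eq, eq_comm]

theorem zEquiv_iff_centralizer_eq {g h : G} (hg : (centralizer {g}).Normal) :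
    zEquiv g h ↔ centralizer {g} = centralizer {h} := by
  refine ⟨fun ⟨x, hx⟩ => ?_, fun hgh => ⟨1, ?_⟩⟩
  · exact hx ▸ (normal_iff_map_conj_eq.mp hg x).symm
  · exact (normal_iff_map_conj_eq.mp hg 1).trans hgh

theorem setOf_zEquiv_eq_classes_ker (hG : ∀ g : G, (centralizer {g}).Normal) :
    {s : Set G | ∃ g : G, s = {h : G | zEquiv g h}} =
      (Setoid.ker fun g : G => centralizer {g}).classes := by
  have : ∀ g : G, {h : G | zEquiv g h} = {h | Setoid.ker (fun g : G => centralizer {g}) h g} :=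
    fun g => Set.ext fun h => (zEquiv_iff_centralizer_eq (hG g)).trans eq_comm
  simp only [this]
  rfl

end Centralizer

section PrimeCube

variable {p : ℕ} [hp : Fact p.Prime] {G : Type*} [Group G]

theorem card_center_eq_prime_of_card_eq_prime_pow_three (hG : Nat.card G = p ^ 3)
    (hnc : ¬IsMulCommutative G) : Nat.card (center G) = p := by
  obtain ⟨k, hk0, hk⟩ := IsPGroup.card_center_eq_prime_pow hG three_pos
  obtain rfl : k = 1 := by
    by_contra hk1
    have hquot : Nat.card (G ⧸ center G) ∣ p := by
      refine Nat.dvd_of_mul_dvd_mul_right (pow_pos hp.out.pos 2) ?_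
      calc Nat.card (G ⧸ center G) * p ^ 2 ∣ (center G).index * p ^ k :=
            mul_dvd_mul_left _ (pow_dvd_pow p (by omega))
        _ = p * p ^ 2 := by rw [← hk, index_mul_card, hG]; ring
    have := isCyclic_of_card_dvd_prime hquot
    exact hnc (isMulCommutative_of_isCyclic_quotient_center_self G)
  rw [hk, pow_one]

theorem isMulCommutative_quotient_center (hG : Nat.card G = p ^ 3)
    (hZ : Nat.card (center G) = p) : IsMulCommutative (G ⧸ center G) := by
  refine IsPGroup.isMulCommutative_of_card_eq_prime_sq (p := p)
    (Nat.eq_of_mul_eq_mul_right hp.out.pos ?_)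
  rw [← hZ, ← index, index_mul_card, hG, hZ]
  ring

variable [Finite G]

theorem card_centralizer_eq_prime_sq (hG : Nat.card G = p ^ 3) (hZ : Nat.card (center G) = p)
    {g : G} (hg : g ∉ center G) : Nat.card (centralizer {g}) = p ^ 2 := by
  obtain ⟨m, hm⟩ := ((IsPGroup.of_card hG).to_subgroup (centralizer {g})).exists_card_eq
  have hlow : p ^ 1 < p ^ m := by
    rw [pow_one, ← hm, ← hZ]
    refine card_lt_card_of_lt (lt_of_le_of_ne (center_le_centralizer _) fun h => hg ?_)
    exact h ▸ mem_centralizer_singleton_iff.mpr rfl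
  have hhigh : p ^ m < p ^ 3 := by
    rw [← hG, ← hm, ← card_top (G := G)]
    refine card_lt_card_of_lt (lt_top_iff_ne_top.mpr fun h => hg ?_)
    exact centralizer_singleton_eq_top_iff.mp h
  have := (Nat.pow_lt_pow_iff_right hp.out.one_lt).mp hlow
  have := (Nat.pow_lt_pow_iff_right hp.out.one_lt).mp hhigh
  rw [hm, show m = 2 by omega]

theorem centralizer_singleton_eq_iff (hG : Nat.card G = p ^ 3) (hZ : Nat.card (center G) = p)
    {g h : G} (hg : g ∉ center G) :
    centralizer {h} = centralizer {g} ↔ h ∈ centralizer {g} ∧ h ∉ center G := by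
  refine ⟨fun he => ⟨he ▸ mem_centralizer_singleton_iff.mpr rfl, fun hh => hg ?_⟩, ?_⟩
  · rwa [← centralizer_singleton_eq_top_iff, ← he, centralizer_singleton_eq_top_iff]
  rintro ⟨hh, hhZ⟩
  have := IsPGroup.isMulCommutative_of_card_eq_prime_sq (card_centralizer_eq_prime_sq hG hZ hg)
  refine (eq_of_le_of_card_ge (fun x hx => ?_) ?_).symm
  · exact mem_centralizer_singleton_iff.mpr (congrArg Subtype.val (mul_comm' ⟨x, hx⟩ ⟨h, hh⟩))
  · rw [card_centralizer_eq_prime_sq hG hZ hg, card_centralizer_eq_prime_sq hG hZ hhZ]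

theorem ncard_image_centralizer_singleton_compl_center (hG : Nat.card G = p ^ 3)
    (hZ : Nat.card (center G) = p) :
    ((fun g : G => centralizer {g}) '' (center G : Set G)ᶜ).ncard = p + 1 := by
  have hfiber : ∀ g ∈ (center G : Set G)ᶜ,
      {h ∈ (center G : Set G)ᶜ | centralizer {h} = centralizer {g}}.ncard = p ^ 2 - p := by
    intro g hg
    have : {h ∈ (center G : Set G)ᶜ | centralizer {h} = centralizer {g}} =
        (centralizer {g} : Set G) \ center G := by
      ext h
      rw [Set.mem_sep_iff, centralizer_singleton_eq_iff hG hZ hg]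
      exact ⟨fun ⟨hhZ, hC, _⟩ => ⟨hC, hhZ⟩, fun ⟨hC, hhZ⟩ => ⟨hhZ, hC, hhZ⟩⟩
    rw [this, Set.ncard_sdiff (center_le_centralizer _), ncard_coe, ncard_coe,
      card_centralizer_eq_prime_sq hG hZ hg, hZ]
  have hcount := Set.ncard_eq_ncard_image_mul (Set.toFinite _) hfiber
  rw [Set.ncard_compl, ncard_coe, hG, hZ] at hcount
  have hp2 : p < p ^ 2 := lt_self_pow₀ hp.out.one_lt one_lt_two
  refine Nat.eq_of_mul_eq_mul_right (Nat.sub_pos_of_lt hp2) (hcount.symm.trans ?_)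
  zify [hp2.le, (lt_self_pow₀ hp.out.one_lt (by norm_num : 1 < 3)).le]
  ring

theorem card_conjClasses_of_card_eq_prime_pow_three (hG : Nat.card G = p ^ 3)
    (hZ : Nat.card (center G) = p) : Nat.card (ConjClasses G) = p ^ 2 + p - 1 := by
  classical
  have := Fintype.ofFinite G
  have hsum : ∑ g : G, Nat.card (centralizer {g}) = p * p ^ 3 + (p ^ 3 - p) * p ^ 2 := by
    have hcenter : (Finset.univ.filter (· ∈ center G)).card = p := by
      rw [← hZ, Nat.card_eq_fintype_card, Fintype.card_subtype]
    have hnoncenter : (Finset.univ.filter (· ∉ center G)).card = p ^ 3 - p := by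
      have := Finset.card_filter_add_card_filter_not (s := Finset.univ) (· ∈ center G)
      rw [Finset.card_univ, ← Nat.card_eq_fintype_card, hG, hcenter] at this
      omega
    rw [← Finset.sum_filter_add_sum_filter_not Finset.univ (· ∈ center G),
      Finset.sum_const_nat fun g hg => ?_, Finset.sum_const_nat fun g hg => ?_,
      hcenter, hnoncenter]
    · exact card_centralizer_eq_prime_sq hG hZ (Finset.mem_filter.mp hg).2
    · rw [centralizer_singleton_eq_top_iff.mpr (Finset.mem_filter.mp hg).2, card_top, hG]
  refine Nat.eq_of_mul_eq_mul_right (pow_pos hp.out.pos 3) ?_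
  rw [← hG, card_conjClasses_mul_card_eq_sum_card_centralizer, hsum, hG]
  zify [Nat.le_self_pow three_ne_zero p, (by nlinarith [hp.out.one_lt] : 1 ≤ p ^ 2 + p)]
  ring

end PrimeCube

theorem stmt_5_general (p : ℕ) (hp : p.Prime)
    {G : Type*} [Group G] [Fintype G]
    (hcard : Fintype.card G = p ^ 3)
    (hna : ∃ a b : G, a * b ≠ b * a) :
    Set.ncard {s : Set G | ∃ g : G, s = {h : G | zEquiv g h}} = p + 2 ∧
    Nat.card (ConjClasses G) = p ^ 2 + p - 1 := by
  have : Fact p.Prime := ⟨hp⟩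
  have hG : Nat.card G = p ^ 3 := by rw [Nat.card_eq_fintype_card, hcard]
  obtain ⟨a, b, hab⟩ := hna
  have hZ := card_center_eq_prime_of_card_eq_prime_pow_three hG fun _ => hab (mul_comm' a b)
  have := isMulCommutative_quotient_center hG hZ
  refine ⟨?_, card_conjClasses_of_card_eq_prime_pow_three hG hZ⟩
  rw [setOf_zEquiv_eq_classes_ker fun g => normal_of_center_le (center_le_centralizer _),
    Setoid.ncard_classes_ker, range_centralizer_singleton,
    Set.ncard_insert_of_notMem top_notMem_image_centralizer_singleton_compl_center,
    ncard_image_centralizer_singleton_compl_center hG hZ]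

theorem stmt_5 (p : ℕ) (hp : p.Prime) (hodd : Odd p)
    {G : Type*} [Group G] [Fintype G]
    (hcard : Fintype.card G = p ^ 3)
    (hexp : Monoid.exponent G = p)
    (hna : ∃ a b : G, a * b ≠ b * a) :
    Set.ncard {s : Set G | ∃ g : G, s = {h : G | zEquiv g h}} = p + 2 ∧
    Nat.card (ConjClasses G) = p ^ 2 + p - 1 :=
  stmt_5_general p hp hcard hna
end

section
/- Let $p$ be an odd prime and $G$ the non-abelian group of order $p^3$ and exponent $p$. Let $g_1, \dots, g_{p-1}, g_p \in G$ be such that $g_p$ does not commute with $g_\alpha g_{\alpha+1} \cdots g_\beta$ for any $1 \le \alpha \le \beta \le p-1$. Then the commutators $w_i := (g_i \cdots g_{p-1})^{-1} g_p^{-1} (g_i \cdots g_{p-1}) g_p$ for $1 \le i \le p-1$ are pairwise distinct non-identity elements of $Z(G)$; in particular every non-identity central element occurs among $w_1, \dots, w_{p-1}$. -/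
theorem stmt_8 (p : ℕ) (hp : p.Prime) (hodd : Odd p)
    {G : Type*} [Group G] [Fintype G]
    (hcard : Fintype.card G = p ^ 3)
    (hexp : Monoid.exponent G = p)
    (hna : ∃ a b : G, a * b ≠ b * a)
    (g : Fin p → G)
    -- `g_p` does not commute with `g_α ⋯ g_β` for any `1 ≤ α ≤ β ≤ p - 1`
    -- (indices of `Fin p` are `0`-based, so `g_i = g (i-1)`)
    (hnc : ∀ a b : ℕ, a ≤ b → b ≤ p - 2 →
      ¬ Commute (g ⟨p - 1, Nat.sub_lt hp.pos one_pos⟩)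
        ((((List.ofFn g).drop a).take (b - a + 1)).prod)) :
    -- `q a` is the product `g_{a+1} ⋯ g_{p-1}` and `w a` the commutator
    -- `w_{a+1} = (q a)⁻¹ g_p⁻¹ (q a) g_p`, for `0 ≤ a ≤ p - 2`
    let q : ℕ → G := fun a => (((List.ofFn g).drop a).take (p - 1 - a)).prod
    let gp : G := g ⟨p - 1, Nat.sub_lt hp.pos one_pos⟩
    let w : ℕ → G := fun a => (q a)⁻¹ * gp⁻¹ * q a * gp
    (∀ a, a ≤ p - 2 → w a ∈ Subgroup.center G ∧ w a ≠ 1) ∧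
    (∀ a b, a ≤ p - 2 → b ≤ p - 2 → a ≠ b → w a ≠ w b) ∧
    (∀ z ∈ Subgroup.center G, z ≠ 1 → ∃ a, a ≤ p - 2 ∧ w a = z) := by
  classical
  intro q gp w
  haveI : Fact p.Prime := ⟨hp⟩
  have hp3 : 3 ≤ p := by
    have h2 := hp.two_le
    obtain ⟨m, hm⟩ := hodd
    omega
  obtain ⟨x0, y0, hxy0⟩ := hna
  have hpg : IsPGroup p G :=
    IsPGroup.of_card (n := 3) (by rw [Nat.card_eq_fintype_card, hcard])
  -- the center has cardinality p
  have hZdvd : Nat.card (Subgroup.center G) ∣ p ^ 3 := by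
    rw [← hcard, ← Nat.card_eq_fintype_card (α := G)]
    exact Subgroup.card_subgroup_dvd_card _
  obtain ⟨k, hk3, hkZ⟩ := (Nat.dvd_prime_pow hp).mp hZdvd
  haveI : Nontrivial G := Fintype.one_lt_card_iff_nontrivial.mp
    (by rw [hcard]; exact Nat.one_lt_pow (by norm_num) hp.one_lt)
  have hnt : Nontrivial (Subgroup.center G) := IsPGroup.center_nontrivial hpg
  have hk1 : 1 ≤ k := by
    by_contra h
    have hk0 : k = 0 := by omega
    have h2 : 2 ≤ Nat.card (Subgroup.center G) := by
      rw [Nat.card_eq_fintype_card]; exact Fintype.one_lt_card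
    rw [hkZ, hk0, pow_zero] at h2
    omega
  have hk3' : k ≠ 3 := by
    intro h
    have htop : Subgroup.center G = ⊤ := by
      apply Subgroup.eq_top_of_card_eq
      rw [hkZ, h, Nat.card_eq_fintype_card, hcard]
    exact hxy0 ((Subgroup.mem_center_iff.mp (htop ▸ Subgroup.mem_top y0)) x0)
  have hquotcard : ∀ m, Nat.card (Subgroup.center G) = m →
      Nat.card (G ⧸ Subgroup.center G) * m = p ^ 3 := by
    intro m hm
    have h := (Subgroup.card_eq_card_quotient_mul_card_subgroup (Subgroup.center G)).symm
    rwa [hm, Nat.card_eq_fintype_card (α := G), hcard] at h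
  have hk2' : k ≠ 2 := by
    intro h
    have hq := hquotcard (p ^ 2) (by rw [hkZ, h])
    have hqp : Nat.card (G ⧸ Subgroup.center G) = p := by
      have : Nat.card (G ⧸ Subgroup.center G) * p ^ 2 = p * p ^ 2 := by rw [hq]; ring
      exact Nat.eq_of_mul_eq_mul_right (by positivity) this
    have : IsCyclic (G ⧸ Subgroup.center G) := isCyclic_of_prime_card (p := p) hqp
    exact hxy0 (commutative_of_cyclic_center_quotient (QuotientGroup.mk' (Subgroup.center G))
      (by rw [QuotientGroup.ker_mk']) x0 y0)
  have hZp : Nat.card (Subgroup.center G) = p := by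
    have : k = 1 := by omega
    rw [hkZ, this, pow_one]
  -- the quotient by the center has order p^2, hence is commutative
  have hqsq : Nat.card (G ⧸ Subgroup.center G) = p ^ 2 := by
    have hq := hquotcard p hZp
    have : Nat.card (G ⧸ Subgroup.center G) * p = p ^ 2 * p := by rw [hq]; ring
    exact Nat.eq_of_mul_eq_mul_right hp.pos this
  have hqcomm : ∀ a b : G ⧸ Subgroup.center G, a * b = b * a :=
    IsPGroup.commutative_of_card_eq_prime_sq hqsq
  -- commutators are central
  have hcomm : ∀ x y : G, x⁻¹ * y⁻¹ * x * y ∈ Subgroup.center G := by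
    intro x y
    have key : ∀ a b : G ⧸ Subgroup.center G, a⁻¹ * b⁻¹ * a * b = 1 := by
      intro a b
      calc a⁻¹ * b⁻¹ * a * b = a⁻¹ * b⁻¹ * (a * b) := by group
        _ = a⁻¹ * b⁻¹ * (b * a) := by rw [hqcomm a b]
        _ = 1 := by group
    apply (QuotientGroup.eq_one_iff _).mp
    rw [QuotientGroup.mk_mul, QuotientGroup.mk_mul, QuotientGroup.mk_mul,
      QuotientGroup.mk_inv, QuotientGroup.mk_inv]
    exact key _ _
  -- from a trivial commutator, deduce commutation
  have hcommute_of : ∀ u v : G, u⁻¹ * v⁻¹ * u * v = 1 → Commute v u := by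
    intro u v h
    have hC : Commute u⁻¹ v⁻¹ := by
      apply commutatorElement_eq_one_iff_commute.mp
      show u⁻¹ * v⁻¹ * u⁻¹⁻¹ * v⁻¹⁻¹ = 1
      rw [inv_inv, inv_inv]
      exact h
    exact (Commute.inv_left_iff.mp (Commute.inv_right_iff.mp hC)).symm
  -- q a does not commute with gp, for a ≤ p - 2
  have hqnc : ∀ a, a ≤ p - 2 → ¬ Commute gp (q a) := by
    intro a ha
    have := hnc a (p - 2) ha le_rfl
    have heq : p - 2 - a + 1 = p - 1 - a := by omega
    rwa [heq] at this
  -- membership and nontriviality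
  have hwa : ∀ a, a ≤ p - 2 → w a ∈ Subgroup.center G ∧ w a ≠ 1 := by
    intro a ha
    refine ⟨hcomm (q a) gp, ?_⟩
    intro h1
    exact hqnc a ha (hcommute_of (q a) gp h1)
  -- splitting of q : if a < b ≤ p - 2 then q a = u * q b with u the product g_a ⋯ g_{b-1}
  have hsplit : ∀ a b : ℕ, a < b → b ≤ p - 2 →
      q a = (((List.ofFn g).drop a).take (b - a)).prod * q b := by
    intro a b hab hb
    show (((List.ofFn g).drop a).take (p - 1 - a)).prod = _
    have h1 : p - 1 - a = (b - a) + (p - 1 - b) := by omega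
    have h2 : ((List.ofFn g).drop a).drop (b - a) = (List.ofFn g).drop b := by
      rw [List.drop_drop]
      congr 1
      omega
    rw [h1, List.take_add, List.prod_append, h2]
  -- key step : w a = c * w b with c the commutator of u and gp
  have hwstep : ∀ a b : ℕ, a < b → b ≤ p - 2 →
      w a = ((((List.ofFn g).drop a).take (b - a)).prod⁻¹ * gp⁻¹ *
        (((List.ofFn g).drop a).take (b - a)).prod * gp) * w b := by
    intro a b hab hb
    set u : G := (((List.ofFn g).drop a).take (b - a)).prod with hu
    set c : G := u⁻¹ * gp⁻¹ * u * gp with hc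
    have hcen : c ∈ Subgroup.center G := hcomm u gp
    have hcen' : ∀ x : G, x * c = c * x := fun x => (Subgroup.mem_center_iff.mp hcen x)
    have h2 : u⁻¹ * gp⁻¹ * u = c * gp⁻¹ := by rw [hc]; group
    show (q a)⁻¹ * gp⁻¹ * q a * gp = c * ((q b)⁻¹ * gp⁻¹ * q b * gp)
    rw [hsplit a b hab hb]
    calc (u * q b)⁻¹ * gp⁻¹ * (u * q b) * gp
        = (q b)⁻¹ * (u⁻¹ * gp⁻¹ * u) * q b * gp := by group
      _ = (q b)⁻¹ * (c * gp⁻¹) * q b * gp := by rw [h2]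
      _ = (q b)⁻¹ * c * (gp⁻¹ * q b * gp) := by group
      _ = c * (q b)⁻¹ * (gp⁻¹ * q b * gp) := by rw [hcen' (q b)⁻¹]
      _ = c * ((q b)⁻¹ * gp⁻¹ * q b * gp) := by group
  -- pairwise distinct (ordered version)
  have hwlt : ∀ a b : ℕ, a < b → b ≤ p - 2 → w a ≠ w b := by
    intro a b hab hb heq
    set u : G := (((List.ofFn g).drop a).take (b - a)).prod with hu
    have hstep := hwstep a b hab hb
    rw [heq] at hstep
    have hc1 : u⁻¹ * gp⁻¹ * u * gp = 1 :=
      mul_right_cancel (a := u⁻¹ * gp⁻¹ * u * gp) (b := w b) (c := 1)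
        (by rw [one_mul]; exact hstep.symm)
    have hcommute : Commute gp u := hcommute_of u gp hc1
    have hkey := hnc a (b - 1) (by omega) (by omega)
    have heq2 : b - 1 - a + 1 = b - a := by omega
    rw [heq2] at hkey
    exact hkey hcommute
  have hwne : ∀ a b, a ≤ p - 2 → b ≤ p - 2 → a ≠ b → w a ≠ w b := by
    intro a b ha hb hab
    rcases lt_or_gt_of_ne hab with h | h
    · exact hwlt a b h hb
    · exact fun he => hwlt b a h ha he.symm
  refine ⟨hwa, hwne, ?_⟩
  -- surjectivity onto nontrivial central elements
  intro z hz hz1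
  have hZp' : Fintype.card (Subgroup.center G) = p := by
    rw [← Nat.card_eq_fintype_card]; exact hZp
  let φ : Fin (p - 1) → Subgroup.center G := fun i =>
    ⟨w i, (hwa i (by have := i.isLt; omega)).1⟩
  have hinj : Function.Injective φ := by
    intro i j hij
    by_contra hne
    exact hwne i j (by have := i.isLt; omega) (by have := j.isLt; omega)
      (fun h => hne (Fin.ext h)) (congrArg Subtype.val hij)
  have himg : Finset.image φ Finset.univ = Finset.univ \ {(1 : Subgroup.center G)} := by
    apply Finset.eq_of_subset_of_card_le
    · intro x hx
      simp only [Finset.mem_image, Finset.mem_univ, true_and] at hx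
      obtain ⟨i, rfl⟩ := hx
      simp only [Finset.mem_sdiff, Finset.mem_univ, Finset.mem_singleton, true_and]
      intro h
      exact (hwa i (by have := i.isLt; omega)).2 (congrArg Subtype.val h)
    · rw [Finset.card_sdiff_of_subset (Finset.singleton_subset_iff.mpr (Finset.mem_univ _)),
        Finset.card_univ, hZp', Finset.card_singleton,
        Finset.card_image_of_injective _ hinj, Finset.card_univ, Fintype.card_fin]
  have hzin : (⟨z, hz⟩ : Subgroup.center G) ∈ Finset.image φ Finset.univ := by
    rw [himg]
    simp only [Finset.mem_sdiff, Finset.mem_univ, Finset.mem_singleton, true_and]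
    intro h
    exact hz1 (congrArg Subtype.val h)
  simp only [Finset.mem_image, Finset.mem_univ, true_and] at hzin
  obtain ⟨i, hi⟩ := hzin
  exact ⟨i, by have := i.isLt; omega, congrArg Subtype.val hi⟩
end

section
/- Let $p$ be an odd prime and $G$ the non-abelian group of order $p^3$ and exponent $p$. Every sequence $S$ over $G$ of length $3p-2$ having at least $p-2$ terms in the center $Z(G)$ contains a nonempty subsequence whose terms, in some order, multiply to the identity. -/
open scoped commutatorElement Pointwise

open MvPolynomial in
theorem exists_nonempty_sum_eq_zero_of_card_mul_lt {K σ ι : Type*} [Field K] [Fintype K]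
    [Fintype σ] [Fintype ι] (f : ι → σ → K)
    (h : Fintype.card ι * (Fintype.card K - 1) < Fintype.card σ) :
    ∃ I : Finset σ, I.Nonempty ∧ ∀ j, ∑ i ∈ I, f j i = 0 := by
  classical
  set q := Fintype.card K
  have hq : q - 1 ≠ 0 := by have := Fintype.one_lt_card (α := K); omega
  -- `t ^ (q - 1)` is the indicator of `t ≠ 0`, so a nonzero common zero of the `F j` selects `I`.
  set F : ι → MvPolynomial σ K := fun j => ∑ i, C (f j i) * X i ^ (q - 1)
  have hF : ∀ x j, eval x (F j) = ∑ i, f j i * x i ^ (q - 1) := by simp [F]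
  have hdeg : ∑ j, (F j).totalDegree < Fintype.card σ := by
    calc ∑ j, (F j).totalDegree ≤ ∑ _j : ι, (q - 1) := Finset.sum_le_sum fun j _ => by
          refine (totalDegree_finsetSum _ _).trans (Finset.sup_le fun i _ => ?_)
          refine (totalDegree_mul _ _).trans ?_
          simp [totalDegree_C, totalDegree_X_pow]
      _ < Fintype.card σ := by simpa using h
  let zero : {x : σ → K // ∀ j, eval x (F j) = 0} := ⟨0, fun j => by rw [hF]; simp [zero_pow hq]⟩
  obtain ⟨⟨x, hx⟩, hx0⟩ := Fintype.exists_ne_of_one_lt_card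
    (lt_of_lt_of_le (CharP.char_is_prime K (ringChar K)).one_lt
      (Nat.le_of_dvd (Fintype.card_pos_iff.2 ⟨zero⟩)
        (char_dvd_card_solutions_of_fintype_sum_lt _ hdeg))) zero
  obtain ⟨i, hi⟩ := Function.ne_iff.1 fun h => hx0 (Subtype.ext h)
  refine ⟨Finset.univ.filter (x · ≠ 0), ⟨i, by simpa [zero] using hi⟩, fun j => ?_⟩
  refine Eq.trans ?_ ((hF x j).symm.trans (hx j))
  rw [Finset.sum_filter]
  refine Finset.sum_congr rfl fun i _ => ?_
  split_ifs with hxi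
  · rw [FiniteField.pow_card_sub_one_eq_one _ hxi, mul_one]
  · rw [not_ne_iff.1 hxi, zero_pow hq, mul_zero]

theorem Multiset.exists_le_sum_map_eq_zero_of_card_mul_lt {K α ι : Type*} [Field K] [Fintype K]
    [Fintype ι] (S : Multiset α) (ψ : ι → α → K)
    (h : Fintype.card ι * (Fintype.card K - 1) < Multiset.card S) :
    ∃ T ≤ S, T ≠ 0 ∧ ∀ j, (T.map (ψ j)).sum = 0 := by
  classical
  obtain ⟨I, hI, hsum⟩ := exists_nonempty_sum_eq_zero_of_card_mul_lt
    (fun j (i : S) => ψ j i) (by rwa [Multiset.card_coe])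
  refine ⟨I.val.map (fun i : S => (i : α)), ?_, ?_, fun j => ?_⟩
  · calc I.val.map (fun i : S => (i : α))
        ≤ (Finset.univ : Finset S).val.map (fun i : S => (i : α)) :=
          Multiset.map_le_map (Finset.val_le_iff.2 I.subset_univ)
      _ = S := Multiset.map_univ_coe S
  · rw [Ne, Multiset.map_eq_zero, Finset.val_eq_zero]
    exact hI.ne_empty
  · rw [Multiset.map_map]
    exact hsum j

theorem ZMod.min_le_card_powerset_sums {α : Type*} {p : ℕ} (hp : p.Prime) (f : α → ZMod p)
    (s : Multiset α) (hs : ∀ a ∈ s, f a ≠ 0) :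
    min p (Multiset.card s + 1) ≤ (s.powerset.map fun t => (t.map f).sum).toFinset.card := by
  classical
  induction s using Multiset.induction_on with
  | empty => simp
  | cons a s ih =>
    have hsplit : ((a ::ₘ s).powerset.map fun t => (t.map f).sum).toFinset
        = ({0, f a} : Finset (ZMod p)) + (s.powerset.map fun t => (t.map f).sum).toFinset := by
      ext t
      simp [Multiset.powerset_cons, Finset.mem_add, or_comm, eq_comm]
    have hcd := ZMod.cauchy_davenport hp (s := ({0, f a} : Finset (ZMod p)))
      (t := (s.powerset.map fun t => (t.map f).sum).toFinset)
      (by simp) ⟨0, by simpa using ⟨0, Multiset.zero_le s, rfl⟩⟩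
    rw [Finset.card_pair (hs a (Multiset.mem_cons_self a s)).symm] at hcd
    rw [hsplit, Multiset.card_cons]
    have := ih fun b hb => hs b (Multiset.mem_cons_of_mem hb)
    omega

theorem Finset.mem_or_mem_of_card_univ_le {α : Type*} [Fintype α] {A : Finset α} {a b : α}
    (hab : a ≠ b) (hA : Fintype.card α ≤ A.card + 1) : a ∈ A ∨ b ∈ A := by
  classical
  by_contra! h
  have hdisj : Disjoint A {a, b} := by simp [Finset.disjoint_insert_right, h.1, h.2]
  have := Finset.card_le_univ (A ∪ {a, b})
  rw [Finset.card_union_of_disjoint hdisj, Finset.card_pair hab] at this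
  omega
theorem Multiset.sum_map_filter_of_ne {α M : Type*} [AddCommMonoid M] {s : Multiset α}
    {f : α → M} {P : α → Prop} [DecidablePred P] (h : ∀ a ∈ s, f a ≠ 0 → P a) :
    ((s.filter P).map f).sum = (s.map f).sum := by
  conv_rhs => rw [← Multiset.filter_add_not P s]
  rw [Multiset.map_add, Multiset.sum_add, Multiset.sum_eq_zero (s := (s.filter (¬P ·)).map f),
    add_zero]
  intro b hb
  obtain ⟨a, ha, rfl⟩ := Multiset.mem_map.1 hb
  have ha' := Multiset.mem_filter.1 ha
  exact not_ne_iff.1 fun hne => ha'.2 (h a ha'.1 hne)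

theorem Multiset.exists_coe_eq_coe_prod_ne_of_not_commute {G : Type*} [Group G]
    {M : Multiset G} {g h : G} (hg : g ∈ M) (hh : h ∈ M) (hgh : ¬Commute g h) :
    ∃ l₁ l₂ : List G, (l₁ : Multiset G) = M ∧ (l₂ : Multiset G) = M ∧ l₁.prod ≠ l₂.prod := by
  classical
  have hne : h ≠ g := fun e => hgh (e ▸ Commute.refl h)
  set t := ((M.erase g).erase h).toList
  have ht : g ::ₘ h ::ₘ (t : Multiset G) = M := by
    rw [Multiset.coe_toList, Multiset.cons_erase ((Multiset.mem_erase_of_ne hne).2 hh),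
      Multiset.cons_erase hg]
  refine ⟨g :: h :: t, h :: g :: t, ht, by rw [← ht, Multiset.cons_swap]; rfl, fun e => hgh ?_⟩
  simp only [List.prod_cons, ← mul_assoc] at e
  exact mul_right_cancel e

namespace HasProdOneSubseq

variable {G H : Type*} [Group G] [Group H] {S T : Multiset G}

lemma mono (h : HasProdOneSubseq S) (hST : S ≤ T) : HasProdOneSubseq T :=
  let ⟨l, hl, hlS, hprod⟩ := h
  ⟨l, hl, hlS.trans hST, hprod⟩

lemma map (h : HasProdOneSubseq S) (f : G →* H) : HasProdOneSubseq (S.map f) :=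
  let ⟨l, hl, hlS, hprod⟩ := h
  ⟨l.map f, by simpa using hl, by simpa using Multiset.map_le_map hlS, by
    rw [← map_list_prod, hprod, map_one]⟩

lemma of_one_mem (h : (1 : G) ∈ S) : HasProdOneSubseq S :=
  ⟨[1], List.cons_ne_nil _ _, by simpa using h, List.prod_singleton⟩

end HasProdOneSubseq

lemma MulEquiv.apply_mem_center_iff {G H : Type*} [Group G] [Group H] (e : G ≃* H) {g : G} :
    e g ∈ Subgroup.center H ↔ g ∈ Subgroup.center G := by
  rw [← SetLike.mem_coe, Subgroup.coe_center, MulEquivClass.apply_mem_center_iff,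
    ← Subgroup.coe_center, SetLike.mem_coe]

section PowVal

variable {M : Type*} [Monoid M] {p : ℕ} {g : M}

lemma pow_val_add [NeZero p] (hg : g ^ p = 1) (s t : ZMod p) :
    g ^ (s + t).val = g ^ s.val * g ^ t.val := by
  rw [ZMod.val_add, ← pow_eq_pow_mod _ hg, pow_add]

lemma pow_val_mul (hg : g ^ p = 1) (s t : ZMod p) : g ^ (s * t).val = g ^ (s.val * t.val) := by
  rw [ZMod.val_mul, ← pow_eq_pow_mod _ hg]

lemma eq_zero_of_pow_val_eq_one [Fact p.Prime] (hg : g ^ p = 1) (hg1 : g ≠ 1) {s : ZMod p}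
    (hs : g ^ s.val = 1) : s = 0 := by
  rw [← ZMod.natCast_zmod_val s, ZMod.natCast_eq_zero_iff]
  have := orderOf_dvd_of_pow_eq_one hs
  rwa [orderOf_eq_prime hg hg1] at this

end PowVal

section Commutator

variable {G : Type*} [Group G]

lemma pow_mul_pow_of_commutatorElement_mem_center {a b : G}
    (hc : ⁅a, b⁆ ∈ Subgroup.center G) (m n : ℕ) :
    a ^ m * b ^ n = ⁅a, b⁆ ^ (m * n) * b ^ n * a ^ m := by
  have hcomm (g : G) : Commute ⁅a, b⁆ g := (Subgroup.mem_center_iff.1 hc g).symm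
  have hconj : ∀ m, MulAut.conj (a ^ m) (b ^ n) = ⁅a, b⁆ ^ (m * n) * b ^ n := by
    intro m
    induction m with
    | zero => simp
    | succ m ih =>
      have hfix : MulAut.conj a (⁅a, b⁆ ^ (m * n)) = ⁅a, b⁆ ^ (m * n) := by
        rw [MulAut.conj_apply, ← ((hcomm a).pow_left _).eq, mul_inv_cancel_right]
      rw [pow_succ', map_mul, MulAut.mul_apply, ih, map_mul, hfix, map_pow,
        conj_eq_commutatorElement_mul, (hcomm b).mul_pow, ← mul_assoc, ← pow_add, Nat.succ_mul]
  rw [← hconj, MulAut.conj_apply, inv_mul_cancel_right]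

variable {p : ℕ} [Fact p.Prime]

lemma isMulCommutative_of_card_eq_prime_pow {m : ℕ} (hm : m ≤ 2) (hG : Nat.card G = p ^ m) :
    IsMulCommutative G := by
  interval_cases m
  · have : Subsingleton G := (Nat.card_eq_one_iff_unique.1 (by simpa using hG)).1
    infer_instance
  · have : IsCyclic G := isCyclic_of_prime_card (by simpa using hG)
    infer_instance
  · exact IsPGroup.isMulCommutative_of_card_eq_prime_sq hG

lemma commutatorElement_mem_center_of_card_eq_prime_pow_three [Finite G]
    (hG : Nat.card G = p ^ 3) (g h : G) : ⁅g, h⁆ ∈ Subgroup.center G := by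
  obtain ⟨k, hk, hZ⟩ := IsPGroup.card_center_eq_prime_pow hG (by norm_num)
  obtain ⟨m, hQ⟩ := IsPGroup.iff_card.1 ((IsPGroup.of_card hG).to_quotient (Subgroup.center G))
  have hmk : p ^ (m + k) = p ^ 3 := by
    rw [pow_add, ← hQ, ← hZ, ← hG]
    exact (Subgroup.card_eq_card_quotient_mul_card_subgroup _).symm
  have := isMulCommutative_of_card_eq_prime_pow (p := p) (m := m)
    (by have := Nat.pow_right_injective (Fact.out : p.Prime).two_le hmk; omega) hQ
  rw [← QuotientGroup.eq_one_iff, ← QuotientGroup.mk'_apply, map_commutatorElement,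
    commutatorElement_eq_one_iff_commute]
  exact this.is_comm.comm _ _

end Commutator

/-- For odd `p` this is the Heisenberg group of order `p³` with the symmetric cocycle
`(x y' - y x') / 2`; for `p = 2` the junk value `2⁻¹ = 0` makes it abelian. -/
@[ext]
structure Heisenberg (p : ℕ) where
  x : ZMod p
  y : ZMod p
  z : ZMod p

namespace Heisenberg

variable {p : ℕ}

instance : Mul (Heisenberg p) :=
  ⟨fun u v => ⟨u.x + v.x, u.y + v.y, u.z + v.z + 2⁻¹ * (u.x * v.y - u.y * v.x)⟩⟩
instance : One (Heisenberg p) := ⟨⟨0, 0, 0⟩⟩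
instance : Inv (Heisenberg p) := ⟨fun u => ⟨-u.x, -u.y, -u.z⟩⟩

@[simp] lemma mul_x (u v : Heisenberg p) : (u * v).x = u.x + v.x := rfl
@[simp] lemma mul_y (u v : Heisenberg p) : (u * v).y = u.y + v.y := rfl
@[simp] lemma mul_z (u v : Heisenberg p) :
    (u * v).z = u.z + v.z + 2⁻¹ * (u.x * v.y - u.y * v.x) := rfl
@[simp] lemma one_x : (1 : Heisenberg p).x = 0 := rfl
@[simp] lemma one_y : (1 : Heisenberg p).y = 0 := rfl
@[simp] lemma one_z : (1 : Heisenberg p).z = 0 := rfl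
@[simp] lemma inv_x (u : Heisenberg p) : u⁻¹.x = -u.x := rfl
@[simp] lemma inv_y (u : Heisenberg p) : u⁻¹.y = -u.y := rfl
@[simp] lemma inv_z (u : Heisenberg p) : u⁻¹.z = -u.z := rfl

instance : Group (Heisenberg p) where
  mul_assoc u v w := by ext <;> simp <;> ring
  one_mul u := by ext <;> simp
  mul_one u := by ext <;> simp
  inv_mul_cancel u := by ext <;> simp; ring

def central (s : ZMod p) : Heisenberg p := ⟨0, 0, s⟩

@[simp] lemma central_eq_one_iff {s : ZMod p} : central s = 1 ↔ s = 0 := by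
  simp [central, Heisenberg.ext_iff]

@[simp] lemma central_mul_central (s t : ZMod p) : central s * central t = central (s + t) := by
  ext <;> simp [central]

lemma eq_central_of_x_y {u : Heisenberg p} (hx : u.x = 0) (hy : u.y = 0) : u = central u.z := by
  ext <;> simp [central, hx, hy]

def equivProd : Heisenberg p ≃ ZMod p × ZMod p × ZMod p where
  toFun u := (u.x, u.y, u.z)
  invFun w := ⟨w.1, w.2.1, w.2.2⟩

lemma natCard_eq : Nat.card (Heisenberg p) = p ^ 3 := by
  rw [Nat.card_congr equivProd, Nat.card_prod, Nat.card_prod, Nat.card_zmod]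
  ring

lemma two_mul_inv_two (hodd : Odd p) : (2 : ZMod p) * 2⁻¹ = 1 := by
  exact_mod_cast ZMod.coe_mul_inv_eq_one 2 (Nat.coprime_two_left.2 hodd)

lemma commutatorElement_eq (hodd : Odd p) (u v : Heisenberg p) :
    ⁅u, v⁆ = central (u.x * v.y - u.y * v.x) := by
  ext <;> simp [commutatorElement_def, central, mul_assoc]
  linear_combination (u.x * v.y - u.y * v.x) * two_mul_inv_two hodd

lemma commute_iff (hodd : Odd p) {u v : Heisenberg p} : Commute u v ↔ u.x * v.y = u.y * v.x := by
  rw [← commutatorElement_eq_one_iff_commute, commutatorElement_eq hodd, central_eq_one_iff,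
    sub_eq_zero]

lemma mem_center_iff (hodd : Odd p) {u : Heisenberg p} :
    u ∈ Subgroup.center (Heisenberg p) ↔ u.x = 0 ∧ u.y = 0 := by
  simp only [Subgroup.mem_center_iff]
  constructor
  · intro h
    have hX := (commute_iff hodd).1 (h ⟨1, 0, 0⟩)
    have hY := (commute_iff hodd).1 (h ⟨0, 1, 0⟩)
    simp only [one_mul, zero_mul] at hX hY
    exact ⟨hY.symm, hX⟩
  · rintro ⟨hx, hy⟩ v
    exact ((commute_iff hodd).2 (by simp [hx, hy])).symm

lemma injective_of_central (hodd : Odd p) {G : Type*} [Group G] (f : Heisenberg p →* G)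
    (hf : ∀ s, f (central s) = 1 → s = 0) : Function.Injective f := by
  refine (injective_iff_map_eq_one f).2 fun u hu => ?_
  have hcomm : ∀ v, f ⁅u, v⁆ = 1 := fun v => by
    rw [map_commutatorElement, hu, commutatorElement_one_left]
  have hx := hf _ (commutatorElement_eq hodd u ⟨0, 1, 0⟩ ▸ hcomm _)
  have hy := hf _ (commutatorElement_eq hodd u ⟨1, 0, 0⟩ ▸ hcomm _)
  simp only [mul_one, mul_zero, sub_zero, zero_sub, neg_eq_zero] at hx hy
  rw [eq_central_of_x_y hx hy] at hu ⊢
  rw [hf _ hu]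
  rfl

section Lift

variable [NeZero p] {G : Type*} [Group G]

/-- The shift `x y / 2` in the exponent of `⁅a, b⁆` converts the symmetric cocycle into the
relation `a ^ m * b ^ n = ⁅a, b⁆ ^ (m n) * b ^ n * a ^ m`. -/
def lift (hodd : Odd p) {a b : G} (hc : ⁅a, b⁆ ∈ Subgroup.center G)
    (hexp : ∀ g : G, g ^ p = 1) : Heisenberg p →* G where
  toFun u := b ^ u.y.val * a ^ u.x.val * ⁅a, b⁆ ^ (u.z + 2⁻¹ * (u.x * u.y)).val
  map_one' := by simp
  map_mul' u v := by
    have hz : (u * v).z + 2⁻¹ * ((u * v).x * (u * v).y)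
        = (u.z + 2⁻¹ * (u.x * u.y)) + (v.z + 2⁻¹ * (v.x * v.y)) + u.x * v.y := by
      simp only [mul_x, mul_y, mul_z]
      linear_combination (u.x * v.y) * two_mul_inv_two hodd
    have hmid (k : ℕ) (g h : G) : g * ⁅a, b⁆ ^ k * h = g * h * ⁅a, b⁆ ^ k := by
      rw [mul_assoc, (Subgroup.mem_center_iff.1 (pow_mem hc k) h).symm, ← mul_assoc]
    rw [hz, mul_x, mul_y, pow_val_add (hexp a), pow_val_add (hexp b), pow_val_add (hexp _),
      pow_val_add (hexp _), pow_val_mul (hexp _)]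
    symm
    simp only [← mul_assoc]
    rw [hmid _ _ (b ^ v.y.val), hmid _ _ (a ^ v.x.val), mul_assoc (b ^ u.y.val),
      pow_mul_pow_of_commutatorElement_mem_center hc]
    simp only [← mul_assoc]
    rw [hmid _ _ (b ^ v.y.val), hmid _ _ (a ^ u.x.val), hmid _ _ (a ^ v.x.val),
      hmid (u.x.val * v.y.val) _ (⁅a, b⁆ ^ _), hmid (u.x.val * v.y.val) _ (⁅a, b⁆ ^ _)]

lemma lift_central (hodd : Odd p) {a b : G} (hc : ⁅a, b⁆ ∈ Subgroup.center G)
    (hexp : ∀ g : G, g ^ p = 1) (s : ZMod p) : lift hodd hc hexp (central s) = ⁅a, b⁆ ^ s.val := by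
  simp [lift, central]

end Lift

theorem nonempty_mulEquiv {G : Type*} [Group G] [Finite G] [Fact p.Prime] (hodd : Odd p)
    (hG : Nat.card G = p ^ 3) (hexp : ∀ g : G, g ^ p = 1) (hna : ∃ a b : G, a * b ≠ b * a) :
    Nonempty (Heisenberg p ≃* G) := by
  obtain ⟨a, b, hab⟩ := hna
  have hc := commutatorElement_mem_center_of_card_eq_prime_pow_three hG a b
  have hc1 : ⁅a, b⁆ ≠ 1 := mt commutatorElement_eq_one_iff_mul_comm.1 hab
  have hinj := injective_of_central hodd (lift hodd hc hexp) fun s hs =>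
    eq_zero_of_pow_val_eq_one (hexp _) hc1 (lift_central hodd hc hexp s ▸ hs)
  exact ⟨MulEquiv.ofBijective _ (hinj.bijective_of_nat_card_le (by rw [hG, natCard_eq]))⟩

lemma list_prod_x (l : List (Heisenberg p)) : l.prod.x = (l.map x).sum := by
  induction l with
  | nil => rfl
  | cons u l ih => simp [ih]

lemma list_prod_y (l : List (Heisenberg p)) : l.prod.y = (l.map y).sum := by
  induction l with
  | nil => rfl
  | cons u l ih => simp [ih]

lemma z_mul_of_commute (hodd : Odd p) {u v : Heisenberg p} (h : Commute u v) :
    (u * v).z = u.z + v.z := by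
  rw [mul_z, (commute_iff hodd).1 h, sub_self, mul_zero, add_zero]

lemma list_prod_z_of_pairwise_commute (hodd : Odd p) {l : List (Heisenberg p)}
    (h : ∀ u ∈ l, ∀ v ∈ l, Commute u v) : l.prod.z = (l.map z).sum := by
  induction l with
  | nil => rfl
  | cons u l ih =>
    have hu : Commute u l.prod := Commute.list_prod_right _ _ fun v hv =>
      h u List.mem_cons_self v (List.mem_cons_of_mem _ hv)
    rw [List.prod_cons, z_mul_of_commute hodd hu, List.map_cons, List.sum_cons,
      ih fun v hv w hw => h v (List.mem_cons_of_mem _ hv) w (List.mem_cons_of_mem _ hw)]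

lemma list_prod_of_forall_mem_center (hodd : Odd p) {l : List (Heisenberg p)}
    (h : ∀ u ∈ l, u ∈ Subgroup.center (Heisenberg p)) : l.prod = central (l.map z).sum := by
  induction l with
  | nil => rfl
  | cons u l ih =>
    have hu := (mem_center_iff hodd).1 (h u List.mem_cons_self)
    rw [List.prod_cons, ih fun v hv => h v (List.mem_cons_of_mem _ hv),
      eq_central_of_x_y hu.1 hu.2, central_mul_central]
    rfl

lemma hasProdOneSubseq_of_pairwise_commute (hodd : Odd p) {T : Multiset (Heisenberg p)}
    (hT : T ≠ 0) (hcomm : ∀ u ∈ T, ∀ v ∈ T, Commute u v) (hx : (T.map x).sum = 0)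
    (hy : (T.map y).sum = 0) (hz : (T.map z).sum = 0) : HasProdOneSubseq T := by
  refine ⟨T.toList, by simpa using hT, by simp, ?_⟩
  ext
  · rw [list_prod_x, Multiset.sum_map_toList, hx, one_x]
  · rw [list_prod_y, Multiset.sum_map_toList, hy, one_y]
  · rw [list_prod_z_of_pairwise_commute hodd fun u hu v hv =>
      hcomm u (Multiset.mem_toList.1 hu) v (Multiset.mem_toList.1 hv),
      Multiset.sum_map_toList, hz, one_z]

lemma exists_le_list_prod_eq_or_eq (hp : p.Prime) (hodd : Odd p) {W : Multiset (Heisenberg p)}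
    (hWc : ∀ w ∈ W, w ∈ Subgroup.center (Heisenberg p)) (h1 : (1 : Heisenberg p) ∉ W)
    (hW : p - 2 ≤ Multiset.card W) {c₁ c₂ : Heisenberg p}
    (hc₁ : c₁ ∈ Subgroup.center (Heisenberg p)) (hc₂ : c₂ ∈ Subgroup.center (Heisenberg p))
    (hne : c₁ ≠ c₂) :
    ∃ W' ≤ W, W'.toList.prod = c₁ ∨ W'.toList.prod = c₂ := by
  have : Fact p.Prime := ⟨hp⟩
  have hz : ∀ w ∈ W, w.z ≠ 0 := fun w hw hz => by
    have := (mem_center_iff hodd).1 (hWc w hw)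
    rw [eq_central_of_x_y this.1 this.2, hz, central_eq_one_iff.2 rfl] at hw
    exact h1 hw
  have hcard := ZMod.min_le_card_powerset_sums hp z W hz
  have hc₁' := (mem_center_iff hodd).1 hc₁
  have hc₂' := (mem_center_iff hodd).1 hc₂
  obtain ⟨ζ, hζ, hcζ⟩ : ∃ ζ ∈ (W.powerset.map fun t => (t.map z).sum).toFinset,
      central ζ = c₁ ∨ central ζ = c₂ := by
    rw [eq_central_of_x_y hc₁'.1 hc₁'.2, eq_central_of_x_y hc₂'.1 hc₂'.2] at hne ⊢
    rcases Finset.mem_or_mem_of_card_univ_le (a := c₁.z) (b := c₂.z)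
      (A := (W.powerset.map fun t => (t.map z).sum).toFinset) (fun h => hne (by rw [h]))
      (by rw [ZMod.card]; omega)
      with h | h
    exacts [⟨_, h, Or.inl rfl⟩, ⟨_, h, Or.inr rfl⟩]
  obtain ⟨W', hW', rfl⟩ := Multiset.mem_map.1 (Multiset.mem_toFinset.1 hζ)
  refine ⟨W', Multiset.mem_powerset.1 hW', ?_⟩
  rwa [list_prod_of_forall_mem_center hodd fun u hu =>
    hWc u (Multiset.mem_of_le (Multiset.mem_powerset.1 hW') (Multiset.mem_toList.1 hu)),
    Multiset.sum_map_toList]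

lemma hasProdOneSubseq_of_not_commute (hp : p.Prime) (hodd : Odd p)
    {S T W : Multiset (Heisenberg p)} (hTS : T ≤ S) (hx : (T.map x).sum = 0)
    (hy : (T.map y).sum = 0) {g h : Heisenberg p} (hg : g ∈ T) (hh : h ∈ T) (hgh : ¬Commute g h)
    (hWS : W ≤ S) (hWc : ∀ w ∈ W, w ∈ Subgroup.center (Heisenberg p))
    (h1 : (1 : Heisenberg p) ∉ W) (hW : p - 2 ≤ Multiset.card W) : HasProdOneSubseq S := by
  classical
  -- Dropping the central terms of `T` keeps the `x`- and `y`-sums and makes the terms used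
  -- disjoint from `W`.
  set T₁ := T.filter (· ∉ Subgroup.center (Heisenberg p))
  have hprod_mem (l : List (Heisenberg p)) (hl : (l : Multiset (Heisenberg p)) = T₁) :
      l.prod ∈ Subgroup.center (Heisenberg p) := by
    have hsum (f : Heisenberg p → ZMod p) (hf : ∀ u ∈ Subgroup.center (Heisenberg p), f u = 0) :
        (l.map f).sum = (T.map f).sum := by
      rw [← Multiset.sum_coe, ← Multiset.map_coe, hl]
      exact Multiset.sum_map_filter_of_ne fun u _ hu hc => hu (hf u hc)
    rw [mem_center_iff hodd, list_prod_x, list_prod_y,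
      hsum x fun u hu => ((mem_center_iff hodd).1 hu).1,
      hsum y fun u hu => ((mem_center_iff hodd).1 hu).2]
    exact ⟨hx, hy⟩
  have hgT₁ : g ∈ T₁ :=
    Multiset.mem_filter.2 ⟨hg, fun hc => hgh (Subgroup.mem_center_iff.1 hc h).symm⟩
  have hhT₁ : h ∈ T₁ := Multiset.mem_filter.2 ⟨hh, fun hc => hgh (Subgroup.mem_center_iff.1 hc g)⟩
  obtain ⟨l₁, l₂, hl₁, hl₂, hne⟩ :=
    Multiset.exists_coe_eq_coe_prod_ne_of_not_commute hgT₁ hhT₁ hgh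
  obtain ⟨W', hW'W, hW'⟩ := exists_le_list_prod_eq_or_eq hp hodd hWc h1 hW
    (inv_mem (hprod_mem l₁ hl₁)) (inv_mem (hprod_mem l₂ hl₂)) (inv_injective.ne hne)
  obtain ⟨l, hl, hprod⟩ : ∃ l : List (Heisenberg p), (l : Multiset (Heisenberg p)) = T₁ ∧
      (l ++ W'.toList).prod = 1 := by
    rcases hW' with h | h
    exacts [⟨l₁, hl₁, by rw [List.prod_append, h, mul_inv_cancel]⟩,
      ⟨l₂, hl₂, by rw [List.prod_append, h, mul_inv_cancel]⟩]
  refine ⟨l ++ W'.toList, ?_, ?_, hprod⟩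
  · rintro hnil
    rw [List.append_eq_nil_iff.1 hnil |>.1] at hl
    rw [← hl] at hgT₁
    exact Multiset.notMem_zero g hgT₁
  · rw [← Multiset.coe_add, hl, Multiset.coe_toList,
      ← Multiset.filter_add_not (· ∉ Subgroup.center (Heisenberg p)) S]
    refine add_le_add (Multiset.filter_le_filter _ hTS)
      (Multiset.le_filter.2 ⟨hW'W.trans hWS, fun w hw => ?_⟩)
    exact not_not.2 (hWc w (Multiset.mem_of_le hW'W hw))

theorem hasProdOneSubseq (hp : p.Prime) (hodd : Odd p) (S : Multiset (Heisenberg p))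
    (hS : 3 * (p - 1) < Multiset.card S) (W : Multiset (Heisenberg p)) (hWS : W ≤ S)
    (hW : p - 2 ≤ Multiset.card W) (hWc : ∀ w ∈ W, w ∈ Subgroup.center (Heisenberg p)) :
    HasProdOneSubseq S := by
  have : Fact p.Prime := ⟨hp⟩
  by_cases h1 : (1 : Heisenberg p) ∈ S
  · exact HasProdOneSubseq.of_one_mem h1
  obtain ⟨T, hTS, hT, hsum⟩ := S.exists_le_sum_map_eq_zero_of_card_mul_lt ![x, y, z]
    (by simpa [ZMod.card] using hS)
  by_cases hcomm : ∀ u ∈ T, ∀ v ∈ T, Commute u v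
  · exact (hasProdOneSubseq_of_pairwise_commute hodd hT hcomm (hsum 0) (hsum 1) (hsum 2)).mono
      hTS
  push Not at hcomm
  obtain ⟨g, hg, h, hh, hgh⟩ := hcomm
  exact hasProdOneSubseq_of_not_commute hp hodd hTS (hsum 0) (hsum 1) hg hh hgh hWS hWc
    (fun h => h1 (Multiset.mem_of_le hWS h)) hW

end Heisenberg

theorem stmt_9 (p : ℕ) (hp : p.Prime) (hodd : Odd p)
    {G : Type*} [Group G] [Fintype G]
    (hcard : Fintype.card G = p ^ 3)
    (hexp : Monoid.exponent G = p)
    (hna : ∃ a b : G, a * b ≠ b * a)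
    (S : Multiset G) (hlen : Multiset.card S = 3 * p - 2)
    (hcen : ∃ Z : Multiset G, Z ≤ S ∧ p - 2 ≤ Multiset.card Z ∧
      ∀ z ∈ Z, z ∈ Subgroup.center G) :
    HasProdOneSubseq S := by
  have : Fact p.Prime := ⟨hp⟩
  obtain ⟨Z, hZS, hZcard, hZc⟩ := hcen
  obtain ⟨e⟩ := Heisenberg.nonempty_mulEquiv hodd (by rw [Nat.card_eq_fintype_card, hcard])
    (fun g => hexp ▸ Monoid.pow_exponent_eq_one g) hna
  have hS := Heisenberg.hasProdOneSubseq hp hodd (S.map e.symm)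
    (by rw [Multiset.card_map, hlen]; have := hp.two_le; omega) (Z.map e.symm)
    (Multiset.map_le_map hZS) (by rwa [Multiset.card_map])
    (by simpa [e.symm.apply_mem_center_iff] using hZc)
  simpa [Multiset.map_map] using hS.map e.toMonoidHom
end

section
/- Let $p$ be an odd prime and $G$ the non-abelian group of order $p^3$ and exponent $p$. If a sequence $W$ over $G$ of length $p^3 + 3p - 3$ has at least $p^3 + 2p - 2$ terms lying in a fixed maximal subgroup $M$ of $G$ with $M \cong C_p \times C_p$, then $W$ has a product-one subsequence of length exactly $p^3$. -/
/-!
In `𝔽_p[H]`, for `H` abelian generated by `g_i` of order dividing `p ^ e_i`, the augmentation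
ideal is spanned by the `g_i - 1`, and `(g_i - 1) ^ p ^ e_i = g_i ^ p ^ e_i - 1 = 0`; hence its
`(∑ (p ^ e_i - 1) + 1)`-st power vanishes. A sequence `S` without nonempty product-one
subsequence has `∏_{x ∈ S} (1 - x)` with coefficient `1` at the identity, so it is not longer
than `∑ (p ^ e_i - 1)` (Olson). For `H = C_p × C_p × C_{p²}`, applied to `v ↦ (v, 1)`, the
last coordinate counts the length, which yields product-one subsequences of length exactly
`p²` in any `p² + 2p - 2` terms of `C_p × C_p`. Removing `p` such blocks one after the other
from the `p³ + 2p - 2` terms lying in `M ≅ C_p × C_p` leaves a product-one subsequence of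
length `p³`, and its terms commute, so any ordering has product one.
-/

open Multiset

namespace Multiset

theorem exists_le_card_eq {α : Type*} {s : Multiset α} {n : ℕ} (h : n ≤ card s) :
    ∃ t ≤ s, card t = n := by
  obtain ⟨t, ht⟩ := card_pos_iff_exists_mem.1 <| by
    rw [card_powersetCard]; exact Nat.choose_pos h
  exact ⟨t, mem_powersetCard.1 ht⟩

theorem exists_le_card_eq_mul_prod_eq_one {α : Type*} [CommMonoid α] {n m : ℕ}
    (h : ∀ s : Multiset α, m ≤ card s → ∃ t ≤ s, card t = n ∧ t.prod = 1) (k : ℕ)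
    (s : Multiset α) (hs : m + n * k ≤ card s) :
    ∃ t ≤ s, card t = n * (k + 1) ∧ t.prod = 1 := by
  induction k generalizing s with
  | zero => simpa using h s (by simpa using hs)
  | succ k ih =>
    obtain ⟨b, hbs, hb, hb1⟩ := h s (by lia)
    obtain ⟨c, rfl⟩ := le_iff_exists_add.1 hbs
    obtain ⟨t, htc, ht, ht1⟩ := ih c (by rw [card_add, hb] at hs; lia)
    refine ⟨b + t, add_le_add_right htc b, by rw [card_add, hb, ht]; ring, ?_⟩
    rw [prod_add, hb1, ht1, one_mul]

end Multiset

namespace Ideal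

variable {R : Type*} [CommSemiring R]

theorem sup_pow_add_sub_one_le (I J : Ideal R) (n m : ℕ) :
    (I ⊔ J) ^ (n + m - 1) ≤ I ^ n ⊔ J ^ m := by
  rw [← Ideal.add_eq_sup, ← Ideal.add_eq_sup, add_pow, Ideal.sum_eq_sup]
  refine Finset.sup_le fun i hi => ?_
  by_cases hn : n ≤ i
  · exact Ideal.mul_le_left.trans (Ideal.mul_le_left.trans
      ((Ideal.pow_le_pow_right hn).trans le_sup_left))
  · refine Ideal.mul_le_left.trans (Ideal.mul_le_right.trans
      ((Ideal.pow_le_pow_right ?_).trans le_sup_right))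
    lia

theorem span_image_pow_eq_bot {ι : Type*} (s : Finset ι) (x : ι → R) (n : ι → ℕ)
    (hx : ∀ i ∈ s, x i ^ n i = 0) : span (x '' s) ^ (∑ i ∈ s, (n i - 1) + 1) = ⊥ := by
  classical
  induction s using Finset.induction_on with
  | empty => simp
  | insert a s ha ih =>
    rw [Finset.coe_insert, Set.image_insert_eq, span_insert, Finset.sum_insert ha,
      ← le_bot_iff]
    calc (span {x a} ⊔ span (x '' s)) ^ (n a - 1 + ∑ i ∈ s, (n i - 1) + 1)
        ≤ (span {x a} ⊔ span (x '' s)) ^ (n a + (∑ i ∈ s, (n i - 1) + 1) - 1) :=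
          pow_le_pow_right (by lia)
      _ ≤ span {x a} ^ n a ⊔ span (x '' s) ^ (∑ i ∈ s, (n i - 1) + 1) :=
          sup_pow_add_sub_one_le _ _ _ _
      _ = ⊥ := by
          rw [span_singleton_pow, hx a (s.mem_insert_self a), span_singleton_eq_bot.2 rfl,
            ih fun i hi => hx i (Finset.mem_insert_of_mem hi), sup_bot_eq]

theorem multiset_prod_mem_pow {I : Ideal R} {s : Multiset R}
    (hs : ∀ x ∈ s, x ∈ I) : s.prod ∈ I ^ card s := by
  induction s using Multiset.induction with
  | empty => simp
  | cons a s ih =>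
    rw [prod_cons, card_cons, pow_succ']
    exact mul_mem_mul (hs a (mem_cons_self a s)) (ih fun x hx => hs x (mem_cons_of_mem hx))

end Ideal

namespace MonoidAlgebra

variable {k H : Type*} [CommRing k] [CommGroup H]

theorem coeff_prod_map_one_sub_of (S : Multiset H) (g : H)
    (hS : ∀ t ≤ S, t.prod = g → t = 0) :
    ((S.map fun x => 1 - of k H x).prod).coeff g = (1 : MonoidAlgebra k H).coeff g := by
  induction S using Multiset.induction generalizing g with
  | empty => simp
  | cons a S ih =>
    have hg := ih g fun t ht => hS t (ht.trans (le_cons_self S a))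
    have hshift : ((S.map fun x => 1 - of k H x).prod).coeff (a⁻¹ * g) = 0 := by
      have hne : a⁻¹ * g ≠ 1 := fun h => cons_ne_zero <|
        hS {a} (cons_le_cons a (zero_le S)) (by rw [prod_singleton, ← inv_mul_eq_one.1 h])
      rw [ih (a⁻¹ * g) fun t ht htg => absurd (hS (a ::ₘ t) (cons_le_cons a ht)
        (by rw [prod_cons, htg, mul_inv_cancel_left])) cons_ne_zero, one_def, coeff_single,
        Finsupp.single_eq_of_ne hne]
    rw [map_cons, prod_cons, sub_mul, one_mul, coeff_sub, Finsupp.sub_apply, of_apply,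
      coeff_single_mul_apply, one_mul, hg, hshift, sub_zero]

end MonoidAlgebra

open MonoidAlgebra in
theorem exists_le_ne_zero_prod_eq_one_of_sum_lt_card {p : ℕ} [Fact p.Prime] {H : Type*}
    [CommGroup H] {ι : Type*} [Fintype ι] (g : ι → H) (e : ι → ℕ)
    (hg : Subgroup.closure (Set.range g) = ⊤) (hge : ∀ i, g i ^ p ^ e i = 1)
    (S : Multiset H) (hS : ∑ i, (p ^ e i - 1) < card S) :
    ∃ t ≤ S, t ≠ 0 ∧ t.prod = 1 := by
  have : CharP (MonoidAlgebra (ZMod p) H) p := charP_of_injective_algebraMap' (ZMod p) p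
  let δ : H → MonoidAlgebra (ZMod p) H := fun x => of (ZMod p) H x - 1
  let J : Ideal (MonoidAlgebra (ZMod p) H) := Ideal.span (Set.range fun i => δ (g i))
  have hδJ (x : H) : δ x ∈ J := by
    induction (hg ▸ Subgroup.mem_top x : x ∈ Subgroup.closure (Set.range g))
      using Subgroup.closure_induction with
    | mem _ hx => obtain ⟨i, rfl⟩ := hx; exact Ideal.subset_span ⟨i, rfl⟩
    | one => simp only [δ, map_one, sub_self, zero_mem]
    | mul x y _ _ hx hy =>
      rw [show δ (x * y) = δ x * δ y + δ x + δ y by simp only [δ, map_mul]; ring]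
      exact add_mem (add_mem (J.mul_mem_right _ hx) hx) hy
    | inv x _ hx =>
      rw [show δ x⁻¹ = -(of (ZMod p) H x⁻¹ * δ x) by
        simp only [δ, mul_sub, ← map_mul, inv_mul_cancel, map_one]; ring]
      exact J.neg_mem (J.mul_mem_left _ hx)
  have hJ : J ^ (∑ i, (p ^ e i - 1) + 1) = ⊥ := by
    simpa only [Finset.coe_univ, Set.image_univ] using
      Ideal.span_image_pow_eq_bot Finset.univ (fun i => δ (g i)) (p ^ e ·) fun i _ => by
        simp only [δ, sub_pow_char_pow, one_pow, ← map_pow, hge, map_one, sub_self]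
  by_contra! hfree
  have hprod : (S.map fun x => 1 - of (ZMod p) H x).prod = 0 := by
    have hmem := Ideal.multiset_prod_mem_pow (I := J) (s := S.map fun x => 1 - of (ZMod p) H x)
      fun y hy => by
        obtain ⟨x, -, rfl⟩ := mem_map.1 hy
        rw [← neg_sub]
        exact J.neg_mem (hδJ x)
    rw [card_map] at hmem
    exact (Submodule.mem_bot _).1 (hJ ▸ Ideal.pow_le_pow_right hS hmem)
  have h1 := coeff_prod_map_one_sub_of (k := ZMod p) S 1 fun t ht ht1 => by
    by_contra h; exact hfree t ht h ht1
  rw [hprod, coeff_one_one] at h1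
  exact zero_ne_one h1

theorem exists_le_ne_zero_prod_eq_one_of_le_card {p : ℕ} [Fact p.Prime]
    (S : Multiset ((Multiplicative (ZMod p) × Multiplicative (ZMod p)) ×
      Multiplicative (ZMod (p ^ 2))))
    (hS : p ^ 2 + 2 * p - 2 ≤ card S) : ∃ t ≤ S, t ≠ 0 ∧ t.prod = 1 := by
  let g : Fin 3 → (Multiplicative (ZMod p) × Multiplicative (ZMod p)) ×
      Multiplicative (ZMod (p ^ 2)) :=
    ![((.ofAdd 1, 1), 1), ((1, .ofAdd 1), 1), (1, .ofAdd 1)]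
  have hg : Subgroup.closure (Set.range g) = ⊤ := by
    refine eq_top_iff.2 fun x _ => ?_
    have hgi (i : Fin 3) (n : ℕ) : g i ^ n ∈ Subgroup.closure (Set.range g) :=
      pow_mem (Subgroup.subset_closure (Set.mem_range_self i)) n
    convert mul_mem (mul_mem (hgi 0 x.1.1.toAdd.val) (hgi 1 x.1.2.toAdd.val))
      (hgi 2 x.2.toAdd.val)
    ext <;> simp [g]
  have hge : ∀ i, g i ^ p ^ ![1, 1, 2] i = 1 := by
    have h (n : ℕ) : Multiplicative.ofAdd (1 : ZMod n) ^ n = 1 := by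
      rw [← ofAdd_nsmul, nsmul_one, ZMod.natCast_self, ofAdd_zero]
    intro i; fin_cases i <;> simp [g, h]
  have hp : 1 ≤ p ^ 2 := Nat.one_le_pow _ _ (Fact.out : p.Prime).pos
  exact exists_le_ne_zero_prod_eq_one_of_sum_lt_card g _ hg hge S
    (by simp only [Fin.sum_univ_three, Matrix.cons_val_zero, Matrix.cons_val_one, Matrix.cons_val,
      pow_one]; lia)

theorem exists_le_card_eq_sq_prod_eq_one {p : ℕ} [Fact p.Prime]
    (S : Multiset (Multiplicative (ZMod p) × Multiplicative (ZMod p)))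
    (hS : p ^ 2 + 2 * p - 2 ≤ card S) : ∃ t ≤ S, card t = p ^ 2 ∧ t.prod = 1 := by
  obtain ⟨S₀, hS₀, hS₀card⟩ := exists_le_card_eq hS
  let f : Multiplicative (ZMod p) × Multiplicative (ZMod p) →
      (Multiplicative (ZMod p) × Multiplicative (ZMod p)) × Multiplicative (ZMod (p ^ 2)) :=
    fun v => (v, .ofAdd 1)
  obtain ⟨t, ht, ht0, ht1⟩ :=
    exists_le_ne_zero_prod_eq_one_of_le_card (S₀.map f) (by rw [card_map, hS₀card])
  have hsnd : t.map Prod.snd = replicate (card t) (.ofAdd 1) :=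
    eq_replicate.2 ⟨card_map _ _, fun b hb => by
      obtain ⟨x, hx, rfl⟩ := mem_map.1 hb
      obtain ⟨v, -, rfl⟩ := mem_map.1 (mem_of_le ht hx)
      rfl⟩
  have hdvd : p ^ 2 ∣ card t := by
    have := congrArg (MonoidHom.snd _ _) ht1
    rw [map_multiset_prod, MonoidHom.map_one, MonoidHom.coe_snd, hsnd, prod_replicate,
      ← ofAdd_nsmul, nsmul_one] at this
    exact (ZMod.natCast_eq_zero_iff _ _).1 (congrArg Multiplicative.toAdd this)
  refine ⟨t.map Prod.fst, ?_, ?_, ?_⟩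
  · calc t.map Prod.fst ≤ (S₀.map f).map Prod.fst := map_le_map ht
      _ = S₀ := by simp [f]
      _ ≤ S := hS₀
  · have hp := (Fact.out : p.Prime).two_le
    have hle : card t ≤ p ^ 2 + 2 * p - 2 := by simpa [hS₀card] using card_le_card ht
    obtain ⟨m, hm⟩ := hdvd
    have hm0 : m ≠ 0 := by rintro rfl; exact ht0 (card_eq_zero.1 (by simpa using hm))
    have hm2 : m < 2 := by
      by_contra! h
      have : p ^ 2 * 2 ≤ p ^ 2 * m := Nat.mul_le_mul_left _ h
      have : 2 * p ≤ p ^ 2 := by nlinarith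
      lia
    obtain rfl : m = 1 := by lia
    rw [card_map, hm, mul_one]
  · rw [← MonoidHom.coe_fst, ← map_multiset_prod, ht1, map_one]

theorem Subgroup.exists_list_prod_eq_one_of_mulEquiv {G β : Type*} [Group G] [CommMonoid β]
    {M : Subgroup G} (e : M ≃* β) {n m : ℕ}
    (h : ∀ s : Multiset β, m ≤ card s → ∃ t ≤ s, card t = n ∧ t.prod = 1)
    {W T : Multiset G} (hTW : T ≤ W) (hT : m ≤ card T) (hTM : ∀ x ∈ T, x ∈ M) :
    ∃ l : List G, (l : Multiset G) ≤ W ∧ l.length = n ∧ l.prod = 1 := by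
  lift T to Multiset M using hTM
  obtain ⟨t, ht, htn, ht1⟩ := h (T.map e) (by rwa [card_map] at hT ⊢)
  set l := (t.map e.symm).toList
  have hl : (l.map e : Multiset β) = t := by
    rw [← map_coe, coe_toList]; simp
  refine ⟨l.map Subtype.val, ?_, by simp [l, htn], ?_⟩
  · rw [← map_coe, coe_toList]
    calc (t.map e.symm).map Subtype.val ≤ ((T.map e).map e.symm).map Subtype.val :=
          map_le_map (map_le_map ht)
      _ = T.map Subtype.val := by simp
      _ ≤ W := hTW
  · have : e l.prod = 1 := by rw [map_list_prod, ← prod_coe, hl, ht1]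
    rw [← M.coe_subtype, ← map_list_prod, e.map_eq_one_iff.1 this, map_one]

theorem stmt_13_general (p : ℕ) (hp : p.Prime)
    {G : Type*} [Group G]
    (M : Subgroup G)
    (hMiso : Nonempty (M ≃* (Multiplicative (ZMod p) × Multiplicative (ZMod p))))
    (W : Multiset G)
    (hM : ∃ T : Multiset G, T ≤ W ∧ p ^ 3 + 2 * p - 2 ≤ Multiset.card T ∧
      ∀ t ∈ T, t ∈ M) :
    ∃ l : List G, (l : Multiset G) ≤ W ∧ l.length = p ^ 3 ∧ l.prod = 1 := by
  have : Fact p.Prime := ⟨hp⟩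
  obtain ⟨e⟩ := hMiso
  obtain ⟨T, hTW, hT, hTM⟩ := hM
  have hcube : p ^ 2 * (p - 1 + 1) = p ^ 3 := by rw [Nat.sub_add_cancel hp.one_le, ← pow_succ]
  have hbound : p ^ 2 + 2 * p - 2 + p ^ 2 * (p - 1) = p ^ 3 + 2 * p - 2 := by
    rw [Nat.mul_sub, mul_one, ← pow_succ]
    have : p ^ 2 ≤ p ^ 3 := Nat.pow_le_pow_right hp.pos (by norm_num)
    have := hp.two_le
    lia
  refine Subgroup.exists_list_prod_eq_one_of_mulEquiv e (fun s hs => ?_) hTW (hbound ▸ hT) hTM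
  rw [← hcube]
  exact exists_le_card_eq_mul_prod_eq_one exists_le_card_eq_sq_prod_eq_one (p - 1) s hs

theorem stmt_13 (p : ℕ) (hp : p.Prime) (hodd : Odd p)
    {G : Type*} [Group G] [Fintype G]
    (hcard : Fintype.card G = p ^ 3)
    (hexp : Monoid.exponent G = p)
    (hna : ∃ a b : G, a * b ≠ b * a)
    (M : Subgroup G) (hMmax : IsCoatom M)
    (hMiso : Nonempty (M ≃* (Multiplicative (ZMod p) × Multiplicative (ZMod p))))
    (W : Multiset G) (hlen : Multiset.card W = p ^ 3 + 3 * p - 3)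
    (hM : ∃ T : Multiset G, T ≤ W ∧ p ^ 3 + 2 * p - 2 ≤ Multiset.card T ∧
      ∀ t ∈ T, t ∈ M) :
    ∃ l : List G, (l : Multiset G) ≤ W ∧ l.length = p ^ 3 ∧ l.prod = 1 :=
  stmt_13_general p hp M hMiso W hM
end

section
/- Let $G$ be the non-abelian group of order $27$ and exponent $3$. Let $g_1, g_2, g_3, g_4 \in G$ be non-central elements with $C_G(g_1) \ne C_G(g_3)$, and suppose $g_1 g_2 \in Z(G)$ and $g_3 g_4 \in Z(G)$. Then for every $u \in Z(G)$ there exists a permutation $\sigma$ of $\{1,2,3,4\}$ such that $g_{\sigma(1)} g_{\sigma(2)} g_{\sigma(3)} g_{\sigma(4)} u = 1$. -/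
section aux
variable {G : Type*} [Group G] [Fintype G]

lemma aux_abelian_of_center_big (hcard : Fintype.card G = 27)
    (h9 : 9 ∣ Nat.card (Subgroup.center G)) : ∀ a b : G, a * b = b * a := by
  have hquot : Nat.card (G ⧸ Subgroup.center G) ∣ 3 := by
    have hmul := Subgroup.card_mul_index (Subgroup.center G)
    have hG : Nat.card G = 27 := by simp [Nat.card_eq_fintype_card, hcard]
    rw [Subgroup.index_eq_card, hG] at hmul
    obtain ⟨m, hm⟩ := h9
    refine ⟨m, ?_⟩
    have h2 : 9 * (m * Nat.card (G ⧸ Subgroup.center G)) = 9 * 3 := by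
      rw [← mul_assoc, ← hm, hmul]
    rw [mul_comm]
    omega
  have : IsCyclic (G ⧸ Subgroup.center G) :=
    isCyclic_of_card_dvd_prime (p := 3) hquot
  exact commutative_of_cyclic_center_quotient (QuotientGroup.mk' _)
    (le_of_eq (QuotientGroup.ker_mk' _))

lemma aux_center_card (hcard : Fintype.card G = 27)
    (hna : ∃ a b : G, a * b ≠ b * a) :
    Nat.card (Subgroup.center G) = 3 := by
  have hp : Fact (Nat.Prime 3) := ⟨by norm_num⟩
  have hG : Nat.card G = 3 ^ 3 := by simp [Nat.card_eq_fintype_card, hcard]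
  obtain ⟨k, hk0, hk⟩ := IsPGroup.card_center_eq_prime_pow (p := 3) hG (by norm_num)
  have hdvd := Subgroup.card_subgroup_dvd_card (Subgroup.center G)
  rw [hk, hG] at hdvd
  have hk3 : k ≤ 3 := (Nat.pow_dvd_pow_iff_le_right (by norm_num)).mp hdvd
  obtain ⟨a, b, hab⟩ := hna
  have hknot : ¬ 2 ≤ k := by
    intro h2
    refine hab (aux_abelian_of_center_big hcard ?_ a b)
    rw [hk]
    calc (9:ℕ) = 3 ^ 2 := by norm_num
    _ ∣ 3 ^ k := pow_dvd_pow 3 h2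
  interval_cases k
  · simpa using hk

lemma aux_centralizer_card (hcard : Fintype.card G = 27)
    (hna : ∃ a b : G, a * b ≠ b * a) (x : G) (hx : x ∉ Subgroup.center G) :
    Nat.card (Subgroup.centralizer {x} : Subgroup G) = 9 := by
  have hG : Nat.card G = 27 := by simp [Nat.card_eq_fintype_card, hcard]
  set C := Subgroup.centralizer ({x} : Set G) with hC
  have hdvd : Nat.card C ∣ 27 := hG ▸ Subgroup.card_subgroup_dvd_card C
  have hle : Subgroup.center G ≤ C := Subgroup.center_le_centralizer _
  have h3 : Nat.card (Subgroup.center G) = 3 := aux_center_card hcard hna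
  have h3dvd : 3 ∣ Nat.card C := h3 ▸ Subgroup.card_dvd_of_le hle
  have hne3 : Nat.card C ≠ 3 := by
    intro h
    have : Subgroup.center G = C := Subgroup.eq_of_le_of_card_ge hle (by omega)
    exact hx (this ▸ Subgroup.mem_centralizer_singleton_iff.mpr rfl)
  have hne27 : Nat.card C ≠ 27 := by
    intro h
    have : C = ⊤ := Subgroup.eq_top_of_card_eq C (by omega)
    exact hx (Subgroup.centralizer_eq_top_iff_subset.mp this rfl)
  -- divisors of 27
  have hle27 : Nat.card C ≤ 27 := Nat.le_of_dvd (by norm_num) hdvd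
  interval_cases h : Nat.card C <;> omega

end aux

theorem stmt_18 {G : Type*} [Group G] [Fintype G]
    (hcard : Fintype.card G = 27)
    (hexp : Monoid.exponent G = 3)
    (hna : ∃ a b : G, a * b ≠ b * a)
    (g : Fin 4 → G) (hg : ∀ i, g i ∉ Subgroup.center G)
    (hcent : Subgroup.centralizer {g 0} ≠ Subgroup.centralizer {g 2})
    (h12 : g 0 * g 1 ∈ Subgroup.center G)
    (h34 : g 2 * g 3 ∈ Subgroup.center G)
    (u : G) (hu : u ∈ Subgroup.center G) :
    ∃ σ : Equiv.Perm (Fin 4),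
      g (σ 0) * g (σ 1) * g (σ 2) * g (σ 3) * u = 1 := by
  have hp : Fact (Nat.Prime 3) := ⟨by norm_num⟩
  have hG27 : Nat.card G = 27 := by simp [Nat.card_eq_fintype_card, hcard]
  have h3 : Nat.card (Subgroup.center G) = 3 := aux_center_card hcard hna
  -- g 0 and g 2 do not commute
  have hne : g 0 * g 2 ≠ g 2 * g 0 := by
    intro h
    apply hcent
    have h9 : Nat.card (Subgroup.centralizer ({g 0} : Set G) : Subgroup G) = 9 :=
      aux_centralizer_card hcard hna _ (hg 0)
    have h9' : Nat.card (Subgroup.centralizer ({g 2} : Set G) : Subgroup G) = 9 :=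
      aux_centralizer_card hcard hna _ (hg 2)
    have hcomm := IsPGroup.commutative_of_card_eq_prime_sq (p := 3)
      (G := Subgroup.centralizer ({g 0} : Set G)) (by rw [h9]; norm_num)
    have hg2mem : g 2 ∈ Subgroup.centralizer ({g 0} : Set G) :=
      Subgroup.mem_centralizer_singleton_iff.mpr h.symm
    have hle : Subgroup.centralizer ({g 0} : Set G) ≤ Subgroup.centralizer ({g 2} : Set G) := by
      intro x hx
      refine Subgroup.mem_centralizer_singleton_iff.mpr ?_
      have := hcomm ⟨x, hx⟩ ⟨g 2, hg2mem⟩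
      exact congrArg Subtype.val this
    exact Subgroup.eq_of_le_of_card_ge hle (by omega)
  -- the commutator c is central and nontrivial
  have hc1 : g 0 * g 2 * (g 0)⁻¹ * (g 2)⁻¹ ≠ 1 := by
    intro h
    rw [mul_inv_eq_one, mul_inv_eq_iff_eq_mul] at h
    exact hne h
  have hQcard : Nat.card (G ⧸ Subgroup.center G) = 9 := by
    have hmul := Subgroup.card_mul_index (Subgroup.center G)
    rw [Subgroup.index_eq_card, h3, hG27] at hmul
    omega
  have hQcomm := IsPGroup.commutative_of_card_eq_prime_sq (p := 3)
    (G := G ⧸ Subgroup.center G) (by rw [hQcard]; norm_num)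
  have hcZ : g 0 * g 2 * (g 0)⁻¹ * (g 2)⁻¹ ∈ Subgroup.center G := by
    rw [← QuotientGroup.ker_mk' (Subgroup.center G), MonoidHom.mem_ker]
    simp only [map_mul, map_inv]
    rw [hQcomm ((QuotientGroup.mk' _) (g 0)) ((QuotientGroup.mk' _) (g 2))]
    group
  have h3c : (g 0 * g 2 * (g 0)⁻¹ * (g 2)⁻¹) ^ 3 = 1 := by
    have := Monoid.pow_exponent_eq_one (g 0 * g 2 * (g 0)⁻¹ * (g 2)⁻¹)
    rwa [hexp] at this
  have hordc : orderOf (g 0 * g 2 * (g 0)⁻¹ * (g 2)⁻¹) = 3 := by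
    have hdvd : orderOf (g 0 * g 2 * (g 0)⁻¹ * (g 2)⁻¹) ∣ 3 := orderOf_dvd_of_pow_eq_one h3c
    rcases (Nat.prime_three.eq_one_or_self_of_dvd _ hdvd) with h | h
    · exact absurd (orderOf_eq_one_iff.mp h) hc1
    · exact h
  have hzp : Subgroup.zpowers (g 0 * g 2 * (g 0)⁻¹ * (g 2)⁻¹) = Subgroup.center G := by
    refine Subgroup.eq_of_le_of_card_ge (Subgroup.zpowers_le.mpr hcZ) ?_
    rw [h3, Nat.card_zpowers, hordc]
  -- rewrite g 1 and g 3
  obtain ⟨z1, hz1, e1⟩ : ∃ z, z ∈ Subgroup.center G ∧ g 1 = (g 0)⁻¹ * z :=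
    ⟨g 0 * g 1, h12, by group⟩
  obtain ⟨z2, hz2, e3⟩ : ∃ z, z ∈ Subgroup.center G ∧ g 3 = (g 2)⁻¹ * z :=
    ⟨g 2 * g 3, h34, by group⟩
  have k1 : ∀ a : G, a * z1 = z1 * a := Subgroup.mem_center_iff.mp hz1
  have k2 : ∀ a : G, a * z2 = z2 * a := Subgroup.mem_center_iff.mp hz2
  -- three product identities
  have hA : g 0 * g 1 * g 2 * g 3 * u = z1 * z2 * u := by
    rw [e1, e3]; group
  have hB : g 0 * g 2 * g 1 * g 3 * u
      = (g 0 * g 2 * (g 0)⁻¹ * (g 2)⁻¹) * (z1 * z2 * u) := by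
    rw [e1, e3]
    calc g 0 * g 2 * ((g 0)⁻¹ * z1) * ((g 2)⁻¹ * z2) * u
        = g 0 * g 2 * (g 0)⁻¹ * (z1 * (g 2)⁻¹) * (z2 * u) := by group
      _ = g 0 * g 2 * (g 0)⁻¹ * ((g 2)⁻¹ * z1) * (z2 * u) := by rw [← k1]
      _ = (g 0 * g 2 * (g 0)⁻¹ * (g 2)⁻¹) * (z1 * z2 * u) := by group
  have hC : g 2 * g 0 * g 3 * g 1 * u
      = (g 0 * g 2 * (g 0)⁻¹ * (g 2)⁻¹)⁻¹ * (z1 * z2 * u) := by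
    rw [e1, e3]
    calc g 2 * g 0 * ((g 2)⁻¹ * z2) * ((g 0)⁻¹ * z1) * u
        = g 2 * g 0 * (g 2)⁻¹ * (z2 * (g 0)⁻¹) * (z1 * u) := by group
      _ = g 2 * g 0 * (g 2)⁻¹ * ((g 0)⁻¹ * z2) * (z1 * u) := by rw [← k2]
      _ = (g 2 * g 0 * (g 2)⁻¹ * (g 0)⁻¹) * (z2 * z1) * u := by group
      _ = (g 2 * g 0 * (g 2)⁻¹ * (g 0)⁻¹) * (z1 * z2) * u := by rw [← k2 z1]
      _ = (g 0 * g 2 * (g 0)⁻¹ * (g 2)⁻¹)⁻¹ * (z1 * z2 * u) := by group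
  -- w = z1 * z2 * u is a power of c
  have hw : z1 * z2 * u ∈ Subgroup.zpowers (g 0 * g 2 * (g 0)⁻¹ * (g 2)⁻¹) := by
    rw [hzp]; exact mul_mem (mul_mem hz1 hz2) hu
  obtain ⟨k, hk⟩ := Subgroup.mem_zpowers_iff.mp hw
  rw [← zpow_mod_orderOf, hordc] at hk
  have hk0 : 0 ≤ k % (3:ℕ) := Int.emod_nonneg k (by norm_num)
  have hk3 : k % (3:ℕ) < 3 := Int.emod_lt_of_pos k (by norm_num)
  set n : ℕ := (k % (3:ℕ)).toNat with hn
  have hkn : (g 0 * g 2 * (g 0)⁻¹ * (g 2)⁻¹) ^ n = z1 * z2 * u := by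
    rw [← hk, hn, ← zpow_natCast, Int.toNat_of_nonneg hk0]
  have hn3 : n < 3 := by omega
  interval_cases n
  · -- w = 1, identity permutation
    refine ⟨1, ?_⟩
    simp only [Equiv.Perm.one_apply]
    rw [hA, ← hkn]; group
  · -- w = c, use order 2 0 3 1
    refine ⟨⟨![2,0,3,1], ![1,3,0,2], by decide, by decide⟩, ?_⟩
    have e0 : (⟨![2,0,3,1], ![1,3,0,2], by decide, by decide⟩ : Equiv.Perm (Fin 4)) 0 = 2 := rfl
    show g 2 * g 0 * g 3 * g 1 * u = 1
    rw [hC, ← hkn]; group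
  · -- w = c^2, use order 0 2 1 3
    refine ⟨Equiv.swap 1 2, ?_⟩
    have e0 : (Equiv.swap 1 2 : Equiv.Perm (Fin 4)) 0 = 0 := by decide
    have ea : (Equiv.swap 1 2 : Equiv.Perm (Fin 4)) 1 = 2 := by decide
    have eb : (Equiv.swap 1 2 : Equiv.Perm (Fin 4)) 2 = 1 := by decide
    have ec : (Equiv.swap 1 2 : Equiv.Perm (Fin 4)) 3 = 3 := by decide
    rw [e0, ea, eb, ec, hB, ← hkn]
    have h3c' : (g 0 * g 2 * (g 0)⁻¹ * (g 2)⁻¹) ^ (2 + 1) = 1 := h3c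
    rw [pow_succ'] at h3c'
    exact h3c'
end
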